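/- arXiv:1802.04928 — 9 statements merged into one kernel-verified Lean document; each statement's English description precedes it below -/
import Mathlib

section
/- Let (Ω, P) be a probability space, N ≥ 2 an integer, μ ∈ ℝ, α > 0, and δ > 0. Let x_1, …, x_N : Ω → ℝ and x_1^{(m)}, …, x_N^{(m)} : Ω → ℝ be measurable functions such that |x_i(ω) − x_i^{(m)}(ω)| ≤ δ for all i and all ω ∈ Ω. Define the averages x̄ = (1/N)·Σ_{i=1}^N x_i and x̄^{(m)} = (1/N)·Σ_{i=1}^N x_i^{(m)}, the standard errors s = sqrt((1/(N−1))·Σ_{i=1}^N (x_i − x̄)²) and s^{(m)} = sqrt((1/(N−1))·Σ_{i=1}^N (x_i^{(m)} − x̄^{(m)})²), and let p_α = P(|x̄ − μ| ≤ α·s/√N). Then P( |x̄^{(m)} − μ| ≤ (α/√N)·( s^{(m)} + δ·sqrt(N/(N−1)) ) + δ ) ≥ p_α. -/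
open MeasureTheory Finset

lemma minkowski_sum {ι : Type*} (s : Finset ι) (u v : ι → ℝ) :
    Real.sqrt (∑ i ∈ s, (u i + v i) ^ 2)
      ≤ Real.sqrt (∑ i ∈ s, u i ^ 2) + Real.sqrt (∑ i ∈ s, v i ^ 2) := by
  have hA : (0:ℝ) ≤ ∑ i ∈ s, u i ^ 2 := Finset.sum_nonneg fun i _ => sq_nonneg _
  have hB : (0:ℝ) ≤ ∑ i ∈ s, v i ^ 2 := Finset.sum_nonneg fun i _ => sq_nonneg _
  have hC : (∑ i ∈ s, u i * v i)
      ≤ Real.sqrt (∑ i ∈ s, u i ^ 2) * Real.sqrt (∑ i ∈ s, v i ^ 2) :=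
    Real.sum_mul_le_sqrt_mul_sqrt s u v
  rw [← Real.sqrt_sq (by positivity :
    (0:ℝ) ≤ Real.sqrt (∑ i ∈ s, u i ^ 2) + Real.sqrt (∑ i ∈ s, v i ^ 2))]
  apply Real.sqrt_le_sqrt
  have hexp : ∑ i ∈ s, (u i + v i) ^ 2
      = (∑ i ∈ s, u i ^ 2) + 2 * (∑ i ∈ s, u i * v i) + ∑ i ∈ s, v i ^ 2 := by
    have h0 : ∀ i ∈ s, (u i + v i) ^ 2 = u i ^ 2 + 2 * (u i * v i) + v i ^ 2 :=
      fun i _ => by ring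
    rw [Finset.sum_congr rfl h0, Finset.sum_add_distrib, Finset.sum_add_distrib,
      ← Finset.mul_sum]
  have hsq : (Real.sqrt (∑ i ∈ s, u i ^ 2) + Real.sqrt (∑ i ∈ s, v i ^ 2)) ^ 2
      = (∑ i ∈ s, u i ^ 2)
        + 2 * (Real.sqrt (∑ i ∈ s, u i ^ 2) * Real.sqrt (∑ i ∈ s, v i ^ 2))
        + ∑ i ∈ s, v i ^ 2 := by
    rw [add_sq, Real.sq_sqrt hA, Real.sq_sqrt hB]; ring
  rw [hexp, hsq]
  linarith

lemma key_pointwise (N : ℕ) (hN : 2 ≤ N) (μ α δ : ℝ) (hα : 0 < α) (hδ : 0 < δ)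
    (a b : Fin N → ℝ) (hbias : ∀ i, |a i - b i| ≤ δ)
    (h : |(∑ i, a i) / N - μ|
        ≤ α * Real.sqrt ((∑ i, (a i - (∑ j, a j) / N) ^ 2) / (N - 1)) / Real.sqrt N) :
    |(∑ i, b i) / N - μ|
        ≤ α / Real.sqrt N *
            (Real.sqrt ((∑ i, (b i - (∑ j, b j) / N) ^ 2) / (N - 1))
              + δ * Real.sqrt (N / (N - 1))) + δ := by
  have hN2 : (2:ℝ) ≤ (N:ℝ) := by exact_mod_cast hN
  have hNpos : (0:ℝ) < N := by linarith
  have hN1pos : (0:ℝ) < (N:ℝ) - 1 := by linarith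
  set e : Fin N → ℝ := fun i => a i - b i with he
  have hebd : ∀ i, |e i| ≤ δ := hbias
  have hSa : (0:ℝ) ≤ ∑ i, (a i - (∑ j, a j) / N) ^ 2 :=
    Finset.sum_nonneg fun i _ => sq_nonneg _
  have hSb : (0:ℝ) ≤ ∑ i, (b i - (∑ j, b j) / N) ^ 2 :=
    Finset.sum_nonneg fun i _ => sq_nonneg _
  -- mean difference bound
  have hsum_e : |∑ i, e i| ≤ N * δ := by
    calc |∑ i, e i| ≤ ∑ i, |e i| := Finset.abs_sum_le_sum_abs _ _
      _ ≤ ∑ _i : Fin N, δ := Finset.sum_le_sum fun i _ => hebd i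
      _ = N * δ := by simp [mul_comm]
  have hmean : |(∑ i, a i) / N - (∑ i, b i) / N| ≤ δ := by
    rw [div_sub_div_same, ← Finset.sum_sub_distrib]
    rw [abs_div, abs_of_pos hNpos, div_le_iff₀ hNpos]
    calc |∑ i, (a i - b i)| = |∑ i, e i| := rfl
      _ ≤ N * δ := hsum_e
      _ = δ * N := by ring
  -- centered squared differences bound
  have hcenter : ∑ i, (e i - (∑ j, e j) / N) ^ 2 ≤ (N:ℝ) * δ ^ 2 := by
    have h1 : ∑ i, (e i - (∑ j, e j) / N) ^ 2
        = (∑ i, e i ^ 2) - (∑ i, e i) ^ 2 / N := by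
      have hexp : ∑ i, (e i - (∑ j, e j) / N) ^ 2
          = ∑ i, (e i ^ 2 - 2 * ((∑ j, e j) / N) * e i + ((∑ j, e j) / N) ^ 2) :=
        Finset.sum_congr rfl fun i _ => by ring
      rw [hexp, Finset.sum_add_distrib, Finset.sum_sub_distrib, ← Finset.mul_sum]
      simp only [Finset.sum_const, Finset.card_univ, Fintype.card_fin, nsmul_eq_mul]
      field_simp
      ring
    have h2 : ∑ i, e i ^ 2 ≤ (N:ℝ) * δ ^ 2 := by
      calc ∑ i, e i ^ 2 ≤ ∑ _i : Fin N, δ ^ 2 := by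
            refine Finset.sum_le_sum fun i _ => ?_
            have h := hebd i
            nlinarith [abs_nonneg (e i), sq_abs (e i)]
        _ = (N:ℝ) * δ ^ 2 := by simp [mul_comm]
    have h3 : (0:ℝ) ≤ (∑ i, e i) ^ 2 / N := by positivity
    linarith
  -- standard deviation bound: √Sa ≤ √Sb + δ√N
  have hsd : Real.sqrt (∑ i, (a i - (∑ j, a j) / N) ^ 2)
      ≤ Real.sqrt (∑ i, (b i - (∑ j, b j) / N) ^ 2) + δ * Real.sqrt N := by
    have hdecomp : ∀ i : Fin N, a i - (∑ j, a j) / N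
        = (b i - (∑ j, b j) / N) + (e i - (∑ j, e j) / N) := by
      intro i
      have hsum : (∑ j, a j) = (∑ j, b j) + (∑ j, e j) := by
        rw [← Finset.sum_add_distrib]
        exact Finset.sum_congr rfl fun j _ => by simp [he]
      rw [hsum]
      simp only [he]
      ring
    calc Real.sqrt (∑ i, (a i - (∑ j, a j) / N) ^ 2)
        = Real.sqrt (∑ i, ((b i - (∑ j, b j) / N) + (e i - (∑ j, e j) / N)) ^ 2) := by
          congr 1; exact Finset.sum_congr rfl fun i _ => by rw [hdecomp i]
      _ ≤ Real.sqrt (∑ i, (b i - (∑ j, b j) / N) ^ 2)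
          + Real.sqrt (∑ i, (e i - (∑ j, e j) / N) ^ 2) := minkowski_sum _ _ _
      _ ≤ Real.sqrt (∑ i, (b i - (∑ j, b j) / N) ^ 2) + δ * Real.sqrt N := by
          gcongr
          calc Real.sqrt (∑ i, (e i - (∑ j, e j) / N) ^ 2)
              ≤ Real.sqrt ((N:ℝ) * δ ^ 2) := Real.sqrt_le_sqrt hcenter
            _ = δ * Real.sqrt N := by
                rw [Real.sqrt_mul hNpos.le, Real.sqrt_sq hδ.le]; ring
  -- divide by √(N-1)
  have hs : Real.sqrt ((∑ i, (a i - (∑ j, a j) / N) ^ 2) / ((N:ℝ) - 1))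
      ≤ Real.sqrt ((∑ i, (b i - (∑ j, b j) / N) ^ 2) / ((N:ℝ) - 1))
        + δ * Real.sqrt ((N:ℝ) / ((N:ℝ) - 1)) := by
    rw [Real.sqrt_div hSa, Real.sqrt_div hSb, Real.sqrt_div hNpos.le]
    have hpos : 0 < Real.sqrt ((N:ℝ) - 1) := Real.sqrt_pos.2 hN1pos
    calc Real.sqrt (∑ i, (a i - (∑ j, a j) / N) ^ 2) / Real.sqrt ((N:ℝ) - 1)
        ≤ (Real.sqrt (∑ i, (b i - (∑ j, b j) / N) ^ 2) + δ * Real.sqrt N)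
            / Real.sqrt ((N:ℝ) - 1) := by gcongr
      _ = Real.sqrt (∑ i, (b i - (∑ j, b j) / N) ^ 2) / Real.sqrt ((N:ℝ) - 1)
          + δ * (Real.sqrt N / Real.sqrt ((N:ℝ) - 1)) := by ring
  -- combine
  have hkey : |(∑ i, b i) / N - μ| ≤ |(∑ i, a i) / N - μ| + δ := by
    calc |(∑ i, b i) / N - μ|
        = |((∑ i, a i) / N - μ) - ((∑ i, a i) / N - (∑ i, b i) / N)| := by
          congr 1; ring
      _ ≤ |(∑ i, a i) / N - μ| + |(∑ i, a i) / N - (∑ i, b i) / N| := abs_sub _ _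
      _ ≤ |(∑ i, a i) / N - μ| + δ := by linarith [hmean]
  have hα' : α * Real.sqrt ((∑ i, (a i - (∑ j, a j) / N) ^ 2) / ((N:ℝ) - 1)) / Real.sqrt N
      ≤ α / Real.sqrt N *
          (Real.sqrt ((∑ i, (b i - (∑ j, b j) / N) ^ 2) / ((N:ℝ) - 1))
            + δ * Real.sqrt ((N:ℝ) / ((N:ℝ) - 1))) := by
    have h1 : α * Real.sqrt ((∑ i, (a i - (∑ j, a j) / N) ^ 2) / ((N:ℝ) - 1)) / Real.sqrt N
        = α / Real.sqrt N
            * Real.sqrt ((∑ i, (a i - (∑ j, a j) / N) ^ 2) / ((N:ℝ) - 1)) := by ring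
    rw [h1]
    have hnn : 0 ≤ α / Real.sqrt N := by positivity
    exact mul_le_mul_of_nonneg_left hs hnn
  linarith

theorem stmt0 {Ω : Type*} [MeasurableSpace Ω] (P : Measure Ω) [IsProbabilityMeasure P]
    (N : ℕ) (hN : 2 ≤ N) (μ α δ : ℝ) (hα : 0 < α) (hδ : 0 < δ)
    (x xm : Fin N → Ω → ℝ)
    (hx : ∀ i, Measurable (x i)) (hxm : ∀ i, Measurable (xm i))
    (hbias : ∀ i ω, |x i ω - xm i ω| ≤ δ) :
    P {ω | |(∑ i, x i ω) / N - μ|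
          ≤ α * Real.sqrt ((∑ i, (x i ω - (∑ j, x j ω) / N) ^ 2) / (N - 1)) / Real.sqrt N}
      ≤ P {ω | |(∑ i, xm i ω) / N - μ|
          ≤ α / Real.sqrt N *
              (Real.sqrt ((∑ i, (xm i ω - (∑ j, xm j ω) / N) ^ 2) / (N - 1))
                + δ * Real.sqrt (N / (N - 1))) + δ} := by
  apply measure_mono
  intro ω hω
  exact key_pointwise N hN μ α δ hα hδ (fun i => x i ω) (fun i => xm i ω)
    (fun i => hbias i ω) hω
end

section
/- Let N ≥ 2 be an integer, δ > 0, α ≥ 0, μ ∈ ℝ, and let x_1, …, x_N and x_1^{(m)}, …, x_N^{(m)} be real numbers with |x_i − x_i^{(m)}| ≤ δ for all i. Define x̄ = (1/N)·Σ_{i=1}^N x_i, x̄^{(m)} = (1/N)·Σ_{i=1}^N x_i^{(m)}, s = sqrt((1/(N−1))·Σ_{i=1}^N (x_i − x̄)²), and s^{(m)} = sqrt((1/(N−1))·Σ_{i=1}^N (x_i^{(m)} − x̄^{(m)})²). If |x̄ − μ| ≤ α·s/√N, then |x̄^{(m)} − μ| ≤ (α/√N)·( s^{(m)} + δ·sqrt(N/(N−1))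 ) + δ. -/
open Finset

lemma cs_sqrt {ι : Type*} (s : Finset ι) (f g : ι → ℝ) :
    ∑ i ∈ s, f i * g i
      ≤ Real.sqrt (∑ i ∈ s, f i ^ 2) * Real.sqrt (∑ i ∈ s, g i ^ 2) := by
  have h := sum_mul_sq_le_sq_mul_sq s f g
  calc ∑ i ∈ s, f i * g i ≤ |∑ i ∈ s, f i * g i| := le_abs_self _
    _ = Real.sqrt ((∑ i ∈ s, f i * g i) ^ 2) := (Real.sqrt_sq_eq_abs _).symm
    _ ≤ Real.sqrt ((∑ i ∈ s, f i ^ 2) * ∑ i ∈ s, g i ^ 2) := Real.sqrt_le_sqrt h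
    _ = _ := Real.sqrt_mul (Finset.sum_nonneg fun i _ => sq_nonneg _) _

lemma minkowski {ι : Type*} (s : Finset ι) (f g : ι → ℝ) :
    Real.sqrt (∑ i ∈ s, (f i + g i) ^ 2)
      ≤ Real.sqrt (∑ i ∈ s, f i ^ 2) + Real.sqrt (∑ i ∈ s, g i ^ 2) := by
  have hf : 0 ≤ ∑ i ∈ s, f i ^ 2 := Finset.sum_nonneg fun i _ => sq_nonneg _
  have hg : 0 ≤ ∑ i ∈ s, g i ^ 2 := Finset.sum_nonneg fun i _ => sq_nonneg _
  have hcs := cs_sqrt s f g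
  have h1 : ∑ i ∈ s, (f i + g i) ^ 2
      = ∑ i ∈ s, f i ^ 2 + 2 * ∑ i ∈ s, f i * g i + ∑ i ∈ s, g i ^ 2 := by
    simp only [Finset.mul_sum, ← Finset.sum_add_distrib]
    exact Finset.sum_congr rfl fun i _ => by ring
  have key : ∑ i ∈ s, (f i + g i) ^ 2
      ≤ (Real.sqrt (∑ i ∈ s, f i ^ 2) + Real.sqrt (∑ i ∈ s, g i ^ 2)) ^ 2 := by
    rw [h1, add_sq, Real.sq_sqrt hf, Real.sq_sqrt hg]
    nlinarith
  calc Real.sqrt (∑ i ∈ s, (f i + g i) ^ 2)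
      ≤ Real.sqrt ((Real.sqrt (∑ i ∈ s, f i ^ 2) + Real.sqrt (∑ i ∈ s, g i ^ 2)) ^ 2) :=
        Real.sqrt_le_sqrt key
    _ = _ := Real.sqrt_sq (by positivity)

theorem stmt2 (N : ℕ) (hN : 2 ≤ N) (δ α μ : ℝ) (hδ : 0 < δ) (hα : 0 ≤ α)
    (x xm : Fin N → ℝ)
    (hbias : ∀ i, |x i - xm i| ≤ δ)
    (h : |(∑ i, x i) / N - μ|
        ≤ α * Real.sqrt ((∑ i, (x i - (∑ j, x j) / N) ^ 2) / (N - 1)) / Real.sqrt N) :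
    |(∑ i, xm i) / N - μ|
      ≤ α / Real.sqrt N *
          (Real.sqrt ((∑ i, (xm i - (∑ j, xm j) / N) ^ 2) / (N - 1))
            + δ * Real.sqrt (N / (N - 1))) + δ := by
  have hn2 : (2:ℝ) ≤ (N:ℝ) := by exact_mod_cast hN
  have hn0 : (0:ℝ) < N := by linarith
  have hn1 : (0:ℝ) < (N:ℝ) - 1 := by linarith
  set xb := (∑ j, x j) / (N:ℝ) with hxb
  set xmb := (∑ j, xm j) / (N:ℝ) with hxmb
  set d : Fin N → ℝ := fun i => x i - xm i with hd
  -- mean bias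
  have hsumd : |∑ i, d i| ≤ N * δ := by
    calc |∑ i, d i| ≤ ∑ i, |d i| := Finset.abs_sum_le_sum_abs _ _
      _ ≤ ∑ _i : Fin N, δ := Finset.sum_le_sum fun i _ => hbias i
      _ = N * δ := by simp [mul_comm]
  have hmean : |xb - xmb| ≤ δ := by
    have heq : xb - xmb = (∑ i, d i) / N := by
      rw [hxb, hxmb, div_sub_div_same, ← Finset.sum_sub_distrib]
    rw [heq, abs_div, abs_of_pos hn0, div_le_iff₀ hn0]
    linarith [hsumd]
  -- bound on the centered d sum
  have hdsum : ∑ i, (d i - (xb - xmb)) ^ 2 ≤ N * δ ^ 2 := by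
    have hc : xb - xmb = (∑ i, d i) / N := by
      rw [hxb, hxmb, div_sub_div_same, ← Finset.sum_sub_distrib]
    have hexp : ∑ i, (d i - (xb - xmb)) ^ 2
        = ∑ i, d i ^ 2 - (∑ i, d i) ^ 2 / N := by
      rw [hc]
      have : ∀ i : Fin N, (d i - (∑ j, d j) / N) ^ 2
          = d i ^ 2 - 2 * ((∑ j, d j) / N) * d i + ((∑ j, d j) / N) ^ 2 := fun i => by ring
      rw [Finset.sum_congr rfl fun i _ => this i]
      rw [Finset.sum_add_distrib, Finset.sum_sub_distrib, ← Finset.mul_sum,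
        Finset.sum_const, Finset.card_univ, Fintype.card_fin, nsmul_eq_mul]
      field_simp
      ring
    have hd2 : ∑ i, d i ^ 2 ≤ N * δ ^ 2 := by
      calc ∑ i, d i ^ 2 ≤ ∑ _i : Fin N, δ ^ 2 := by
            refine Finset.sum_le_sum fun i _ => ?_
            show (x i - xm i) ^ 2 ≤ δ ^ 2
            nlinarith [hbias i, sq_abs (x i - xm i), abs_nonneg (x i - xm i)]
        _ = N * δ ^ 2 := by simp [mul_comm]
      
    rw [hexp]
    have : 0 ≤ (∑ i, d i) ^ 2 / N := by positivity
    linarith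
  -- standard deviation bound
  have hsd : Real.sqrt ((∑ i, (x i - xb) ^ 2) / (N - 1))
      ≤ Real.sqrt ((∑ i, (xm i - xmb) ^ 2) / (N - 1)) + δ * Real.sqrt (N / (N - 1)) := by
    have hA : 0 ≤ ∑ i, (x i - xb) ^ 2 := Finset.sum_nonneg fun i _ => sq_nonneg _
    have hB : 0 ≤ ∑ i, (xm i - xmb) ^ 2 := Finset.sum_nonneg fun i _ => sq_nonneg _
    have hdec : ∀ i : Fin N, x i - xb = (xm i - xmb) + (d i - (xb - xmb)) := fun i => by
      simp [hd]; ring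
    have hmk : Real.sqrt (∑ i, (x i - xb) ^ 2)
        ≤ Real.sqrt (∑ i, (xm i - xmb) ^ 2) + Real.sqrt (∑ i, (d i - (xb - xmb)) ^ 2) := by
      rw [Finset.sum_congr rfl fun i _ => by rw [hdec i]]
      exact minkowski Finset.univ _ _
    have h2 : Real.sqrt (∑ i, (d i - (xb - xmb)) ^ 2) ≤ δ * Real.sqrt N := by
      calc Real.sqrt (∑ i, (d i - (xb - xmb)) ^ 2) ≤ Real.sqrt (N * δ ^ 2) :=
            Real.sqrt_le_sqrt hdsum
        _ = δ * Real.sqrt N := by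
            rw [Real.sqrt_mul (le_of_lt hn0), Real.sqrt_sq hδ.le]; ring
    rw [Real.sqrt_div hA, Real.sqrt_div hB, Real.sqrt_div (le_of_lt hn0)]
    have hs : Real.sqrt (∑ i, (x i - xb) ^ 2)
        ≤ Real.sqrt (∑ i, (xm i - xmb) ^ 2) + δ * Real.sqrt N := by linarith [hmk, h2]
    have hc0 : 0 < Real.sqrt ((N:ℝ) - 1) := Real.sqrt_pos.mpr hn1
    calc Real.sqrt (∑ i, (x i - xb) ^ 2) / Real.sqrt ((N:ℝ) - 1)
        ≤ (Real.sqrt (∑ i, (xm i - xmb) ^ 2) + δ * Real.sqrt N) / Real.sqrt ((N:ℝ) - 1) := by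
          gcongr
      _ = _ := by ring
  -- final combination
  have hsN : 0 < Real.sqrt (N:ℝ) := Real.sqrt_pos.mpr hn0
  have habs : |xmb - μ| ≤ |xb - μ| + |xb - xmb| := by
    have : xmb - μ = (xb - μ) - (xb - xmb) := by ring
    rw [this]
    exact abs_sub _ _
  have hstep : α * Real.sqrt ((∑ i, (x i - xb) ^ 2) / (N - 1)) / Real.sqrt N
      ≤ α / Real.sqrt N *
        (Real.sqrt ((∑ i, (xm i - xmb) ^ 2) / (N - 1)) + δ * Real.sqrt (N / (N - 1))) := by
    rw [mul_div_assoc, div_mul_eq_mul_div, mul_div_assoc]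
    gcongr
  calc |xmb - μ| ≤ |xb - μ| + |xb - xmb| := habs
    _ ≤ α * Real.sqrt ((∑ i, (x i - xb) ^ 2) / (N - 1)) / Real.sqrt N + δ := by
        exact add_le_add h hmean
    _ ≤ _ := by linarith [hstep]
end

section
/- Let (Ω, P) be a probability space, N ≥ 2 an integer, μ ∈ ℝ, α > 0, β > 0, and δ > 0. Let x_1, …, x_N : Ω → ℝ and x_1^{(m)}, …, x_N^{(m)} : Ω → ℝ be measurable functions such that |x_i(ω) − x_i^{(m)}(ω)| ≤ δ for all i and all ω ∈ Ω. Define x̄ = (1/N)·Σ_{i=1}^N x_i, x̄^{(m)} = (1/N)·Σ_{i=1}^N x_i^{(m)}, s = sqrt((1/(N−1))·Σ_{i=1}^N (x_i − x̄)²), s^{(m)} = sqrt((1/(N−1))·Σ_{i=1}^N (x_i^{(m)} − x̄^{(m)})²), and p_α = P(|x̄ − μ| ≤ α·s/√N). If δ ≤ β·α·s^{(m)}(ω)/√N for all ω ∈ Ω, then P( |x̄^{(m)} − μ| ≤ (α·s^{(m)}/√N)·( 1 + β + β·α/√(N−1) ) ) ≥ p_α. -/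
open MeasureTheory Finset

/-! Perturbing every sample by at most `δ` moves the sample mean by at most `δ`. The sample
standard deviation is the Euclidean norm of the centred sample scaled by `1/√(N-1)`, hence a
seminorm, so it moves by at most `δ√N/√(N-1)`. On the event `|x̄ - μ| ≤ α s/√N` this gives
`|x̄ᵐ - μ| ≤ α sᵐ/√N + αδ/√(N-1) + δ`, and `δ ≤ βα sᵐ/√N` turns the right-hand side into the
stated bound, so the first event is contained in the second. -/

section SampleStatistics

variable {ι : Type*} [Fintype ι]

noncomputable def sampleMean (v : ι → ℝ) : ℝ := (∑ i, v i) / Fintype.card ι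

noncomputable def sampleStd (v : ι → ℝ) : ℝ :=
  √((∑ i, (v i - sampleMean v) ^ 2) / (Fintype.card ι - 1))

theorem sqrt_sum_add_sq_le (a b : ι → ℝ) :
    √(∑ i, (a i + b i) ^ 2) ≤ √(∑ i, a i ^ 2) + √(∑ i, b i ^ 2) := by
  simpa only [EuclideanSpace.norm_eq, PiLp.add_apply, Real.norm_eq_abs, sq_abs] using
    norm_add_le (WithLp.toLp 2 a : EuclideanSpace ℝ ι) (WithLp.toLp 2 b)

theorem sampleMean_sub (v w : ι → ℝ) : sampleMean (v - w) = sampleMean v - sampleMean w := by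
  simp only [sampleMean, Pi.sub_apply, sum_sub_distrib, sub_div]

theorem sampleStd_eq_sqrt_div (v : ι → ℝ) :
    sampleStd v = √(∑ i, (v i - sampleMean v) ^ 2) / √(Fintype.card ι - 1) :=
  Real.sqrt_div (sum_nonneg fun _ _ => sq_nonneg _) _

theorem sampleStd_add_le (v w : ι → ℝ) : sampleStd (v + w) ≤ sampleStd v + sampleStd w := by
  simp only [sampleStd_eq_sqrt_div, ← add_div]
  refine div_le_div_of_nonneg_right ?_ (Real.sqrt_nonneg _)
  have hmean : sampleMean (v + w) = sampleMean v + sampleMean w := by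
    simp only [sampleMean, Pi.add_apply, sum_add_distrib, add_div]
  calc √(∑ i, ((v + w) i - sampleMean (v + w)) ^ 2)
      = √(∑ i, ((v i - sampleMean v) + (w i - sampleMean w)) ^ 2) := by
        simp only [Pi.add_apply, hmean, add_sub_add_comm]
    _ ≤ _ := sqrt_sum_add_sq_le _ _

theorem sum_sq_sub_sampleMean [Nonempty ι] (d : ι → ℝ) :
    ∑ i, (d i - sampleMean d) ^ 2 = ∑ i, d i ^ 2 - Fintype.card ι * sampleMean d ^ 2 := by
  have hsum : ∑ i, d i = Fintype.card ι * sampleMean d := by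
    rw [sampleMean, mul_div_cancel₀ _ (by positivity)]
  simp only [sub_sq, sum_add_distrib, sum_sub_distrib, ← sum_mul, ← mul_sum, hsum, sum_const,
    card_univ, nsmul_eq_mul]
  ring

theorem sampleStd_le_of_abs_le [Nonempty ι] {d : ι → ℝ} {δ : ℝ} (hd : ∀ i, |d i| ≤ δ) :
    sampleStd d ≤ δ * √(Fintype.card ι) / √(Fintype.card ι - 1) := by
  have hδ : 0 ≤ δ := (abs_nonneg _).trans (hd (Classical.arbitrary ι))
  have hsq : ∑ i, (d i - sampleMean d) ^ 2 ≤ Fintype.card ι * δ ^ 2 := calc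
    ∑ i, (d i - sampleMean d) ^ 2 ≤ ∑ i, d i ^ 2 := by
      rw [sum_sq_sub_sampleMean]
      exact sub_le_self _ (by positivity)
    _ ≤ ∑ _i : ι, δ ^ 2 := sum_le_sum fun i _ => sq_le_sq.mpr ((hd i).trans (le_abs_self δ))
    _ = Fintype.card ι * δ ^ 2 := by simp
  rw [sampleStd_eq_sqrt_div, mul_comm δ, ← Real.sqrt_sq hδ, ← Real.sqrt_mul (Nat.cast_nonneg _)]
  gcongr

theorem abs_sampleMean_sub_le [Nonempty ι] {v w : ι → ℝ} {δ : ℝ} (h : ∀ i, |v i - w i| ≤ δ) :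
    |sampleMean v - sampleMean w| ≤ δ := by
  rw [← sampleMean_sub, sampleMean, abs_div, Nat.abs_cast, div_le_iff₀ (by positivity)]
  calc |∑ i, (v - w) i| ≤ ∑ i, |(v - w) i| := abs_sum_le_sum_abs _ _
    _ ≤ ∑ _i : ι, δ := sum_le_sum fun i _ => h i
    _ = δ * Fintype.card ι := by simp [mul_comm]

theorem abs_sampleMean_sub_le_of_perturbed (hn : 1 < Fintype.card ι) {v w : ι → ℝ}
    {μ α β δ : ℝ} (hα : 0 ≤ α) (hvw : ∀ i, |v i - w i| ≤ δ)
    (hδ : δ ≤ β * α * sampleStd w / √(Fintype.card ι))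
    (hv : |sampleMean v - μ| ≤ α * sampleStd v / √(Fintype.card ι)) :
    |sampleMean w - μ| ≤ α * sampleStd w / √(Fintype.card ι) *
      (1 + β + β * α / √(Fintype.card ι - 1)) := by
  have : Nonempty ι := Fintype.card_pos_iff.mp (by omega)
  set n : ℝ := (Fintype.card ι : ℝ)
  have hn1 : 0 < √(n - 1) := Real.sqrt_pos.mpr (by simpa [n, sub_pos] using hn)
  have hn0 : 0 < √n := Real.sqrt_pos.mpr (by positivity)
  have hstd : sampleStd v ≤ sampleStd w + δ * √n / √(n - 1) := calc
    sampleStd v = sampleStd (w + (v - w)) := by rw [add_sub_cancel]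
    _ ≤ sampleStd w + sampleStd (v - w) := sampleStd_add_le _ _
    _ ≤ sampleStd w + δ * √n / √(n - 1) := by gcongr; exact sampleStd_le_of_abs_le hvw
  calc |sampleMean w - μ| ≤ |sampleMean v - μ| + |sampleMean v - sampleMean w| := by
        rw [add_comm, abs_sub_comm (sampleMean v)]
        exact abs_sub_le _ _ _
    _ ≤ α * (sampleStd w + δ * √n / √(n - 1)) / √n + δ := by
        gcongr
        · exact hv.trans (by gcongr)
        · exact abs_sampleMean_sub_le hvw
    _ = α * sampleStd w / √n + α * δ / √(n - 1) + δ := by field_simp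
    _ ≤ α * sampleStd w / √n + α * (β * α * sampleStd w / √n) / √(n - 1)
          + β * α * sampleStd w / √n := by gcongr
    _ = α * sampleStd w / √n * (1 + β + β * α / √(n - 1)) := by ring

end SampleStatistics

theorem stmt3_general {Ω : Type*} [MeasurableSpace Ω] (P : Measure Ω)
    (N : ℕ) (hN : 2 ≤ N) (μ α β δ : ℝ) (hα : 0 < α)
    (x xm : Fin N → Ω → ℝ)
    (hbias : ∀ i ω, |x i ω - xm i ω| ≤ δ)
    (hδβ : ∀ ω, δ ≤ β * α *
        Real.sqrt ((∑ i, (xm i ω - (∑ j, xm j ω) / N) ^ 2) / (N - 1)) / Real.sqrt N) :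
    P {ω | |(∑ i, x i ω) / N - μ|
          ≤ α * Real.sqrt ((∑ i, (x i ω - (∑ j, x j ω) / N) ^ 2) / (N - 1)) / Real.sqrt N}
      ≤ P {ω | |(∑ i, xm i ω) / N - μ|
          ≤ α * Real.sqrt ((∑ i, (xm i ω - (∑ j, xm j ω) / N) ^ 2) / (N - 1)) / Real.sqrt N *
              (1 + β + β * α / Real.sqrt (N - 1))} := by
  refine measure_mono fun ω hω => ?_
  have key := abs_sampleMean_sub_le_of_perturbed (v := fun i => x i ω) (w := fun i => xm i ω)
    (μ := μ) (β := β) (by rw [Fintype.card_fin]; omega) hα.le (hbias · ω)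
  simp only [sampleStd, sampleMean, Fintype.card_fin] at key
  exact key (hδβ ω) hω

theorem stmt3 {Ω : Type*} [MeasurableSpace Ω] (P : Measure Ω) [IsProbabilityMeasure P]
    (N : ℕ) (hN : 2 ≤ N) (μ α β δ : ℝ) (hα : 0 < α) (hβ : 0 < β) (hδ : 0 < δ)
    (x xm : Fin N → Ω → ℝ)
    (hx : ∀ i, Measurable (x i)) (hxm : ∀ i, Measurable (xm i))
    (hbias : ∀ i ω, |x i ω - xm i ω| ≤ δ)
    (hδβ : ∀ ω, δ ≤ β * α *
        Real.sqrt ((∑ i, (xm i ω - (∑ j, xm j ω) / N) ^ 2) / (N - 1)) / Real.sqrt N) :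
    P {ω | |(∑ i, x i ω) / N - μ|
          ≤ α * Real.sqrt ((∑ i, (x i ω - (∑ j, x j ω) / N) ^ 2) / (N - 1)) / Real.sqrt N}
      ≤ P {ω | |(∑ i, xm i ω) / N - μ|
          ≤ α * Real.sqrt ((∑ i, (xm i ω - (∑ j, xm j ω) / N) ^ 2) / (N - 1)) / Real.sqrt N *
              (1 + β + β * α / Real.sqrt (N - 1))} :=
  stmt3_general P N hN μ α β δ hα x xm hbias hδβ
end

section
/- For m ≥ 1, let T_m denote the m×m real symmetric tridiagonal (Jacobi) matrix with diagonal entries α_1, …, α_m and off-diagonal entries β_2, …, β_m (i.e., (T_m)_{k,k} = α_k and (T_m)_{k,k+1} = (T_m)_{k+1,k} = β_{k+1}), and let T_{m+1} be its (m+1)×(m+1) extension with additional diagonal entry α_{m+1} and off-diagonal entry β_{m+1}. Let K ≥ 1, and let c_1, …, c_K ∈ ℂ and z_1, …, z_K ∈ ℂ be such that T_m − z_k·I and T_{m+1} − z_k·I are invertible (as complex matrices) for each k. Define d_m^K = Re{ Σ_{k=1}^K c_k·[ ((T_{m+1} − z_k·I)⁻¹)_{1,1} − ((T_m − z_k·I)⁻¹)_{1,1}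 ] }. Then d_m^K = −Re{ Σ_{k=1}^K c_k·β_{m+1}·((T_{m+1} − z_k·I)⁻¹)_{m+1,1}·((T_m − z_k·I)⁻¹)_{m,1} }. -/
open Matrix Finset

/-- The `m × m` Jacobi (real symmetric tridiagonal) matrix with diagonal entries
`α 1, …, α m` and off-diagonal entries `β 2, …, β m`, viewed as a complex matrix
(all entries are real). Indices of the matrix are zero-based. -/
noncomputable def jacobiC (a b : ℕ → ℝ) (m : ℕ) : Matrix (Fin m) (Fin m) ℂ :=
  Matrix.of fun i j =>
    if (i : ℕ) = (j : ℕ) then (a ((i : ℕ) + 1) : ℂ)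
    else if (i : ℕ) + 1 = (j : ℕ) then (b ((i : ℕ) + 2) : ℂ)
    else if (j : ℕ) + 1 = (i : ℕ) then (b ((j : ℕ) + 2) : ℂ)
    else 0

lemma key (m : ℕ) (hm : 1 ≤ m) (α β : ℕ → ℝ) (z : ℂ)
    (hA : IsUnit (jacobiC α β m - z • (1 : Matrix (Fin m) (Fin m) ℂ)).det)
    (hB : IsUnit (jacobiC α β (m+1) - z • (1 : Matrix (Fin (m+1)) (Fin (m+1)) ℂ)).det) :
    ((jacobiC α β (m+1) - z • 1)⁻¹) 0 0 - ((jacobiC α β m - z • 1)⁻¹) ⟨0, hm⟩ ⟨0, hm⟩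
    = -((β (m+1) : ℂ) * ((jacobiC α β (m+1) - z • 1)⁻¹ (Fin.last m) 0)
        * ((jacobiC α β m - z • 1)⁻¹ ⟨m - 1, by omega⟩ ⟨0, hm⟩)) := by
  set A : Matrix (Fin m) (Fin m) ℂ := jacobiC α β m - z • 1 with hAdef
  set B : Matrix (Fin (m+1)) (Fin (m+1)) ℂ := jacobiC α β (m+1) - z • 1 with hBdef
  set t : ℂ := B⁻¹ (Fin.last m) 0 with ht
  -- symmetry of A
  have hAsymm : Aᵀ = A := by
    ext i j
    simp only [hAdef, jacobiC, Matrix.transpose_apply, Matrix.sub_apply, Matrix.of_apply,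
      Matrix.smul_apply, Matrix.one_apply, Fin.ext_iff]
    split_ifs <;> first | rfl | omega | (obtain rfl : i = j := Fin.ext (by omega); rfl)
  have hAinvsymm : A⁻¹ᵀ = A⁻¹ := by
    rw [Matrix.transpose_nonsing_inv, hAsymm]
  -- B * B⁻¹ = 1
  have hBB : B * B⁻¹ = 1 := Matrix.mul_nonsing_inv B hB
  -- entry lemmas
  have hB1 : ∀ j l : Fin m, B (Fin.castSucc j) (Fin.castSucc l) = A j l := by
    intro j l
    simp only [hBdef, hAdef, jacobiC, Matrix.sub_apply, Matrix.of_apply,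
      Matrix.smul_apply, Matrix.one_apply, Fin.coe_castSucc, Fin.ext_iff, smul_eq_mul]
  have hB2 : ∀ j : Fin m, B (Fin.castSucc j) (Fin.last m)
      = if (j : ℕ) + 1 = m then (β (m+1) : ℂ) else 0 := by
    intro j
    have hj : (j : ℕ) ≠ m := Nat.ne_of_lt j.isLt
    have hj2 : ¬ (m + 1 = (j : ℕ)) := by omega
    simp only [hBdef, jacobiC, Matrix.sub_apply, Matrix.of_apply, Matrix.smul_apply,
      Matrix.one_apply, Fin.coe_castSucc, Fin.val_last, Fin.ext_iff, hj, hj2,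
      if_false, smul_eq_mul]
    split_ifs with h
    · have : (j : ℕ) + 2 = m + 1 := by omega
      rw [this]; ring
    · ring
  -- the vector
  set y : Fin m → ℂ := fun l => B⁻¹ (Fin.castSucc l) 0 with hy
  have hAy : A *ᵥ y = fun i : Fin m =>
      (if (i : ℕ) = 0 then 1 else 0) - (if (i : ℕ) = m - 1 then (β (m+1) : ℂ) * t else 0) := by
    funext j
    have h1 := congrFun (congrFun hBB (Fin.castSucc j)) 0
    rw [Matrix.mul_apply, Fin.sum_univ_castSucc] at h1
    have hone : (1 : Matrix (Fin (m+1)) (Fin (m+1)) ℂ) (Fin.castSucc j) 0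
        = if (j : ℕ) = 0 then 1 else 0 := by
      simp [Matrix.one_apply, Fin.ext_iff]
    rw [hone] at h1
    simp only [hB1, hB2] at h1
    have hc : ((j : ℕ) + 1 = m) ↔ ((j : ℕ) = m - 1) := by omega
    have : (A *ᵥ y) j = ∑ l : Fin m, A j l * B⁻¹ (Fin.castSucc l) 0 := by
      simp [Matrix.mulVec, dotProduct, hy]
    rw [this]
    rw [← ht] at h1
    have h2 : ∑ l : Fin m, A j l * B⁻¹ (Fin.castSucc l) 0
        = (if (j : ℕ) = 0 then 1 else 0) - (if (j : ℕ) + 1 = m then (β (m+1) : ℂ) else 0) * t := by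
      linear_combination h1
    rw [h2]; simp only [hc]
    split_ifs <;> ring
  have hyinv : y = A⁻¹ *ᵥ (A *ᵥ y) := by
    rw [Matrix.mulVec_mulVec, Matrix.nonsing_inv_mul A hA, Matrix.one_mulVec]
  have hy0 : y ⟨0, hm⟩ = A⁻¹ ⟨0, hm⟩ ⟨0, hm⟩
      - A⁻¹ ⟨0, hm⟩ ⟨m - 1, by omega⟩ * ((β (m+1) : ℂ) * t) := by
    conv_lhs => rw [hyinv, hAy]
    rw [Matrix.mulVec, dotProduct]
    have : ∀ l : Fin m, ((l : ℕ) = 0) = (l = ⟨0, hm⟩) := by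
      intro l; simp [Fin.ext_iff]
    have h2 : ∀ l : Fin m, ((l : ℕ) = m - 1) = (l = (⟨m - 1, by omega⟩ : Fin m)) := by
      intro l; simp [Fin.ext_iff]
    simp only [this, h2, mul_sub, Finset.sum_sub_distrib, mul_ite, mul_one, mul_zero,
      Finset.sum_ite_eq', Finset.mem_univ, if_true]
  have hsym : A⁻¹ ⟨0, hm⟩ ⟨m - 1, by omega⟩ = A⁻¹ ⟨m - 1, by omega⟩ ⟨0, hm⟩ :=
    congrFun (congrFun hAinvsymm ⟨m - 1, by omega⟩) ⟨0, hm⟩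
  have hB00 : B⁻¹ 0 0 = y ⟨0, hm⟩ := by
    have : Fin.castSucc (⟨0, hm⟩ : Fin m) = (0 : Fin (m+1)) := by
      simp [Fin.ext_iff]
    rw [hy]; simp only [this]
  rw [hB00, hy0, hsym]
  ring

theorem stmt5 (m : ℕ) (hm : 1 ≤ m) (α β : ℕ → ℝ) (K : ℕ) (hK : 1 ≤ K)
    (c z : Fin K → ℂ)
    (hinv : ∀ k, IsUnit (jacobiC α β m - z k • (1 : Matrix (Fin m) (Fin m) ℂ)).det)
    (hinv' : ∀ k,
      IsUnit (jacobiC α β (m + 1) - z k • (1 : Matrix (Fin (m + 1)) (Fin (m + 1)) ℂ)).det) :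
    (∑ k, c k *
        (((jacobiC α β (m + 1) - z k • 1)⁻¹) 0 0
          - ((jacobiC α β m - z k • 1)⁻¹) ⟨0, hm⟩ ⟨0, hm⟩)).re
    = -(∑ k, c k * (β (m + 1) : ℂ) *
        (((jacobiC α β (m + 1) - z k • 1)⁻¹) (Fin.last m) 0)
        * (((jacobiC α β m - z k • 1)⁻¹) ⟨m - 1, by omega⟩ ⟨0, hm⟩)).re := by
  have hsum : (∑ k, c k *
        (((jacobiC α β (m + 1) - z k • 1)⁻¹) 0 0
          - ((jacobiC α β m - z k • 1)⁻¹) ⟨0, hm⟩ ⟨0, hm⟩))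
      = -(∑ k, c k * (β (m + 1) : ℂ) *
        (((jacobiC α β (m + 1) - z k • 1)⁻¹) (Fin.last m) 0)
        * (((jacobiC α β m - z k • 1)⁻¹) ⟨m - 1, by omega⟩ ⟨0, hm⟩)) := by
    rw [← Finset.sum_neg_distrib]
    refine Finset.sum_congr rfl fun k _ => ?_
    rw [key m hm α β (z k) (hinv k) (hinv' k)]
    ring
  rw [hsum, Complex.neg_re]
end

section
/- Let n ∈ ℕ ∪ {∞} and let {a_i}_{i=1}^{n−1} be a positive decreasing geometric progression; that is, there is a constant c with 0 < c < 1 and a_{i+1} = c·a_i for all i (if n = ∞ the sequence is infinite and the tail series converges). Let m, m' be integers with 1 ≤ m < m' ≤ n−1 and let t < 1 satisfy a_{m'}/a_m ≤ t. Then (Σ_{i=m'}^{n−1} a_i) / (Σ_{i=m}^{m'−1} a_i) ≤ t/(1−t) if n − m' > m' − m, and ≤ t otherwise. -/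
open Finset

theorem stmt9 (n : ℕ∞) (a : ℕ → ℝ) (c : ℝ) (hc0 : 0 < c) (hc1 : c < 1)
    (hpos : ∀ i, 1 ≤ i → ((i : ℕ) : ℕ∞) < n → 0 < a i)
    (hgeo : ∀ i, 1 ≤ i → (((i + 1 : ℕ)) : ℕ∞) < n → a (i + 1) = c * a i)
    (m m' : ℕ) (hm : 1 ≤ m) (hmm' : m < m') (hm'n : ((m' : ℕ) : ℕ∞) < n)
    (t : ℝ) (ht : t < 1) (hratio : a m' / a m ≤ t) :
    (n - (m' : ℕ∞) > (m' : ℕ∞) - (m : ℕ∞) →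
      (∑' i : {i : ℕ // m' ≤ i ∧ ((i : ℕ) : ℕ∞) < n}, a i) /
          (∑ i ∈ Finset.Ico m m', a i) ≤ t / (1 - t)) ∧
    (¬(n - (m' : ℕ∞) > (m' : ℕ∞) - (m : ℕ∞)) →
      (∑' i : {i : ℕ // m' ≤ i ∧ ((i : ℕ) : ℕ∞) < n}, a i) /
          (∑ i ∈ Finset.Ico m m', a i) ≤ t) := by
  -- general geometric formula
  have hpow : ∀ b r : ℕ, 1 ≤ b → ((b + r : ℕ) : ℕ∞) < n → a (b + r) = c ^ r * a b := by
    intro b r hb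
    induction r with
    | zero => intro _; simp
    | succ r ih =>
      intro hlt
      have hlt' : ((b + r : ℕ) : ℕ∞) < n :=
        lt_of_le_of_lt (by exact_mod_cast Nat.cast_le.mpr (Nat.le_succ (b + r))) hlt
      have := hgeo (b + r) (le_trans hb (Nat.le_add_right _ _)) (by exact_mod_cast hlt)
      rw [show b + (r + 1) = (b + r) + 1 from rfl, this, ih hlt']
      ring
  set k := m' - m with hk
  have hkpos : 0 < k := Nat.sub_pos_of_lt hmm'
  have hmk : m + k = m' := Nat.add_sub_cancel' (le_of_lt hmm')
  have hcast_lt : ∀ i j : ℕ, i < j → ((i : ℕ) : ℕ∞) < ((j : ℕ) : ℕ∞) := by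
    intro i j h; exact_mod_cast h
  have hA : 0 < a m := hpos m hm (lt_trans (hcast_lt m m' hmm') hm'n)
  have ham' : a m' = c ^ k * a m := by rw [← hmk]; exact hpow m k hm (by rw [hmk]; exact hm'n)
  have hck_le_t : c ^ k ≤ t := by
    rw [ham', mul_div_assoc, div_self (ne_of_gt hA), mul_one] at hratio; exact hratio
  have hckpos : 0 < c ^ k := pow_pos hc0 k
  have hck1 : c ^ k < 1 := pow_lt_one₀ (le_of_lt hc0) hc1 (by omega)
  have ht0 : 0 < t := lt_of_lt_of_le hckpos hck_le_t
  have h1c : (0:ℝ) < 1 - c := by linarith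
  have h1t : (0:ℝ) < 1 - t := by linarith
  set u : ℝ := a m / (1 - c) with hu_def
  have hu : 0 < u := div_pos hA h1c
  -- denominator
  have hgeom_k : ∑ r ∈ Finset.range k, c ^ r = (1 - c ^ k) / (1 - c) := by
    rw [geom_sum_eq (ne_of_lt hc1)]
    rw [div_eq_div_iff (by linarith) (by linarith)]; ring
  have hDeq : ∑ i ∈ Finset.Ico m m', a i = (∑ r ∈ Finset.range k, c ^ r) * a m := by
    rw [Finset.sum_Ico_eq_sum_range, ← hk, Finset.sum_mul]
    refine Finset.sum_congr rfl fun r hr => ?_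
    rw [Finset.mem_range] at hr
    exact hpow m r hm (lt_trans (hcast_lt _ m' (by omega)) hm'n)
  have hDval : ∑ i ∈ Finset.Ico m m', a i = (1 - c ^ k) * u := by
    rw [hDeq, hgeom_k, hu_def]; ring
  have hDpos : 0 < ∑ i ∈ Finset.Ico m m', a i := by
    rw [hDval]; exact mul_pos (by linarith) hu
  -- key comparison in the "long tail" case
  have hkey : ∀ T : ℝ, T ≤ c ^ k * u → T / (∑ i ∈ Finset.Ico m m', a i) ≤ t / (1 - t) := by
    intro T hT
    rw [div_le_div_iff₀ hDpos h1t]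
    nlinarith [mul_le_mul_of_nonneg_right hT (le_of_lt h1t),
      mul_nonneg (le_of_lt hu) (sub_nonneg.mpr hck_le_t), hDval]
  cases n with
  | top =>
    have hm'1 : 1 ≤ m' := le_trans hm (le_of_lt hmm')
    have hshift : ∀ j : ℕ, a (m' + j) = c ^ j * a m' := fun j =>
      hpow m' j hm'1 (ENat.coe_lt_top _)
    have htsum : (∑' i : {i : ℕ // m' ≤ i ∧ ((i : ℕ) : ℕ∞) < (⊤ : ℕ∞)}, a i)
        = (1 - c)⁻¹ * a m' := by
      let e : ℕ ≃ {i : ℕ // m' ≤ i ∧ ((i : ℕ) : ℕ∞) < (⊤ : ℕ∞)} :=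
        { toFun := fun j => ⟨m' + j, Nat.le_add_right _ _, ENat.coe_lt_top _⟩
          invFun := fun s => s.1 - m'
          left_inv := fun j => by simp
          right_inv := fun s => by
            ext; exact Nat.add_sub_cancel' s.2.1 }
      rw [← e.tsum_eq (fun i : {i : ℕ // m' ≤ i ∧ ((i : ℕ) : ℕ∞) < (⊤ : ℕ∞)} => a i)]
      simp only [e, Equiv.coe_fn_mk]
      calc (∑' j : ℕ, a (m' + j)) = ∑' j : ℕ, c ^ j * a m' := tsum_congr fun j => hshift j
        _ = (∑' j : ℕ, c ^ j) * a m' := by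
            simpa using tsum_mul_right (f := fun j : ℕ => c ^ j) (a := a m')
        _ = (1 - c)⁻¹ * a m' := by rw [tsum_geometric_of_lt_one (le_of_lt hc0) hc1]
    have hcond : (⊤ : ℕ∞) - (m' : ℕ∞) > (m' : ℕ∞) - (m : ℕ∞) := by
      rw [ENat.top_sub_coe, ← ENat.coe_sub]
      exact ENat.coe_lt_top _
    refine ⟨fun _ => ?_, fun h => absurd hcond h⟩
    apply hkey
    rw [htsum, ham', hu_def]
    apply le_of_eq
    field_simp
  | coe N =>
    have hm'N : m' < N := by exact_mod_cast hm'n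
    have htsum : (∑' i : {i : ℕ // m' ≤ i ∧ ((i : ℕ) : ℕ∞) < ((N : ℕ) : ℕ∞)}, a i)
        = ∑ i ∈ Finset.Ico m' N, a i := by
      let e : {i : ℕ // m' ≤ i ∧ ((i : ℕ) : ℕ∞) < ((N : ℕ) : ℕ∞)} ≃ {x // x ∈ Finset.Ico m' N} :=
        Equiv.subtypeEquivRight (fun i => by
          simp only [Finset.mem_Ico]
          constructor
          · rintro ⟨h1, h2⟩; exact ⟨h1, by exact_mod_cast h2⟩
          · rintro ⟨h1, h2⟩; exact ⟨h1, by exact_mod_cast h2⟩)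
      rw [← e.symm.tsum_eq (fun i : {i : ℕ // m' ≤ i ∧ ((i : ℕ) : ℕ∞) < ((N : ℕ) : ℕ∞)} => a i)]
      simp only [e, Equiv.subtypeEquivRight, Equiv.coe_fn_symm_mk, Equiv.coe_fn_mk]
      exact Finset.tsum_subtype (Finset.Ico m' N) a
    have hm'1 : 1 ≤ m' := le_trans hm (le_of_lt hmm')
    have hT : ∑ i ∈ Finset.Ico m' N, a i = (∑ r ∈ Finset.range (N - m'), c ^ r) * a m' := by
      rw [Finset.sum_Ico_eq_sum_range, Finset.sum_mul]
      refine Finset.sum_congr rfl fun r hr => ?_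
      rw [Finset.mem_range] at hr
      exact hpow m' r hm'1 (by exact_mod_cast (by omega : m' + r < N))
    constructor
    · intro _
      rw [htsum]
      apply hkey
      rw [hT, ham']
      have hsum_le : (∑ r ∈ Finset.range (N - m'), c ^ r) ≤ 1 / (1 - c) := by
        rw [geom_sum_eq (ne_of_lt hc1)]
        have heq : (c ^ (N - m') - 1) / (c - 1) = (1 - c ^ (N - m')) / (1 - c) := by
          rw [div_eq_div_iff (by linarith) (by linarith)]; ring
        rw [heq, div_le_div_iff₀ h1c h1c]
        nlinarith [pow_pos hc0 (N - m')]
      calc (∑ r ∈ Finset.range (N - m'), c ^ r) * (c ^ k * a m)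
          ≤ 1 / (1 - c) * (c ^ k * a m) := by
            apply mul_le_mul_of_nonneg_right hsum_le (by positivity)
        _ = c ^ k * u := by rw [hu_def]; ring
    · intro hle
      rw [htsum]
      have hle' : N - m' ≤ k := by
        by_contra hcon
        apply hle
        have : m' - m < N - m' := by omega
        rw [← ENat.coe_sub, ← ENat.coe_sub]
        exact_mod_cast this
      have hsum_le : (∑ r ∈ Finset.range (N - m'), c ^ r) ≤ ∑ r ∈ Finset.range k, c ^ r := by
        apply Finset.sum_le_sum_of_subset_of_nonneg (Finset.range_subset_range.mpr hle')
        intro i _ _; positivity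
      rw [div_le_iff₀ hDpos, hT, ham', hDeq]
      calc (∑ r ∈ Finset.range (N - m'), c ^ r) * (c ^ k * a m)
          ≤ (∑ r ∈ Finset.range k, c ^ r) * (c ^ k * a m) := by
            apply mul_le_mul_of_nonneg_right hsum_le (by positivity)
        _ = c ^ k * ((∑ r ∈ Finset.range k, c ^ r) * a m) := by ring
        _ ≤ t * ((∑ r ∈ Finset.range k, c ^ r) * a m) := by
            apply mul_le_mul_of_nonneg_right hck_le_t
            rw [← hDeq]; exact le_of_lt hDpos
end

section
/- Let {a_i}_{i=1}^{n−1} be a positive geometric progression with ratio c ∈ (0, 1) (a_{i+1} = c·a_i), where n ∈ ℕ with n ≥ 3, and let m, m' be integers with 1 ≤ m < m' ≤ n−1 and t < 1 with a_{m'}/a_m ≤ t (equivalently c^{m'−m} ≤ t). Then (Σ_{i=m'}^{n−1} a_i) / (Σ_{i=m}^{m'−1} a_i) ≤ (t/(1−t))·( 1 − t^{(n−m')/(m'−m)} ). -/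
/-!
Put `d = m' - m` and `k = n - m'`. The quotient of the two sums is
`c ^ d * (1 + c + ⋯ + c ^ (k - 1)) / (1 + c + ⋯ + c ^ (d - 1))`, which is increasing in `c > 0`:
so is the tail sum, and so is `c ^ d / ∑_{i<d} c ^ i = 1 / ∑_{j=1}^{d} c ^ (-j)`.
Since `c ^ d ≤ t`, replacing `c` by `s = t ^ (1/d)` can only increase the quotient, and at `s`
the geometric sums evaluate to `t / (1 - t) * (1 - t ^ (k/d))`.
-/

open Finset

section GeometricProgression

variable {a : ℕ → ℝ} {c : ℝ} {m n : ℕ}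

theorem eq_pow_mul_of_geometric (hgeo : ∀ i, m ≤ i → i + 1 < n → a (i + 1) = c * a i) :
    ∀ j, m + j < n → a (m + j) = c ^ j * a m
  | 0, _ => by simp
  | j + 1, hj => by
    rw [← add_assoc, hgeo (m + j) (by omega) hj, eq_pow_mul_of_geometric hgeo j (by omega),
      pow_succ]
    ring

theorem sum_Ico_eq_mul_geom_sum (hgeo : ∀ i, m ≤ i → i + 1 < n → a (i + 1) = c * a i)
    {j : ℕ} (hj : m + j ≤ n) :
    ∑ i ∈ Ico m (m + j), a i = a m * ∑ i ∈ range j, c ^ i := by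
  rw [sum_Ico_eq_sum_range, Nat.add_sub_cancel_left, mul_sum]
  refine sum_congr rfl fun i hi => ?_
  rw [eq_pow_mul_of_geometric hgeo i (by simp at hi; omega), mul_comm]

end GeometricProgression

noncomputable def geomTailRatio (d k : ℕ) (x : ℝ) : ℝ :=
  x ^ d * (∑ i ∈ range k, x ^ i) / ∑ i ∈ range d, x ^ i

theorem sum_Ico_div_sum_Ico_eq_geomTailRatio {a : ℕ → ℝ} {c : ℝ} {m n : ℕ}
    (hgeo : ∀ i, m ≤ i → i + 1 < n → a (i + 1) = c * a i) (ham : a m ≠ 0) {d k : ℕ}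
    (hn : m + d + k ≤ n) :
    (∑ i ∈ Ico (m + d) (m + d + k), a i) / ∑ i ∈ Ico m (m + d), a i = geomTailRatio d k c := by
  rcases Nat.eq_zero_or_pos k with rfl | hk
  · simp [geomTailRatio]
  have hgeo' : ∀ i, m + d ≤ i → i + 1 < n → a (i + 1) = c * a i :=
    fun i hi hin => hgeo i (by omega) hin
  rw [sum_Ico_eq_mul_geom_sum hgeo' hn, sum_Ico_eq_mul_geom_sum hgeo (by omega),
    eq_pow_mul_of_geometric hgeo d (by omega), geomTailRatio, mul_assoc,
    mul_left_comm (c ^ d), mul_div_mul_left _ _ ham]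

theorem geomTailRatio_mono {c s : ℝ} (hc : 0 ≤ c) (hcs : c ≤ s) (d k : ℕ) :
    geomTailRatio d k c ≤ geomTailRatio d k s := by
  rcases Nat.eq_zero_or_pos d with rfl | hd
  · simp [geomTailRatio]
  have hs : 0 ≤ s := hc.trans hcs
  have head : c ^ d / ∑ i ∈ range d, c ^ i ≤ s ^ d / ∑ i ∈ range d, s ^ i := by
    rw [div_le_div_iff₀ (geom_sum_pos hc hd.ne') (geom_sum_pos hs hd.ne'), mul_sum, mul_sum]
    refine sum_le_sum fun i hi => ?_
    obtain ⟨j, rfl⟩ : ∃ j, d = i + j := ⟨d - i, by simp at hi; omega⟩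
    calc c ^ (i + j) * s ^ i = c ^ i * s ^ i * c ^ j := by ring
      _ ≤ c ^ i * s ^ i * s ^ j := by gcongr
      _ = s ^ (i + j) * c ^ i := by ring
  have tail : ∑ i ∈ range k, c ^ i ≤ ∑ i ∈ range k, s ^ i :=
    sum_le_sum fun i _ => pow_le_pow_left₀ hc hcs i
  calc geomTailRatio d k c = c ^ d / (∑ i ∈ range d, c ^ i) * ∑ i ∈ range k, c ^ i := by
        rw [geomTailRatio]; ring
    _ ≤ s ^ d / (∑ i ∈ range d, s ^ i) * ∑ i ∈ range k, s ^ i :=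
        mul_le_mul head tail (sum_nonneg fun i _ => pow_nonneg hc i) (by positivity)
    _ = geomTailRatio d k s := by rw [geomTailRatio]; ring

theorem geomTailRatio_eq {x : ℝ} (hx : x ≠ 1) (d k : ℕ) :
    geomTailRatio d k x = x ^ d / (1 - x ^ d) * (1 - x ^ k) := by
  have hx' : 1 - x ≠ 0 := sub_ne_zero.mpr hx.symm
  have geom (j : ℕ) : ∑ i ∈ range j, x ^ i = (1 - x ^ j) / (1 - x) := by
    rw [← mul_neg_geom_sum, mul_div_cancel_left₀ _ hx']
  rw [geomTailRatio, geom, geom]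
  by_cases hd : 1 - x ^ d = 0
  · simp [hd]
  field_simp

theorem stmt10_general (n : ℕ) (a : ℕ → ℝ) (c : ℝ) (hc0 : 0 < c)
    (hpos : ∀ i, 1 ≤ i → i ≤ n - 1 → 0 < a i)
    (hgeo : ∀ i, 1 ≤ i → i + 1 ≤ n - 1 → a (i + 1) = c * a i)
    (m m' : ℕ) (hm : 1 ≤ m) (hmm' : m < m') (hm'n : m' ≤ n - 1)
    (t : ℝ) (ht : t < 1) (hratio : a m' / a m ≤ t) :
    (∑ i ∈ Finset.Ico m' n, a i) / (∑ i ∈ Finset.Ico m m', a i)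
      ≤ t / (1 - t) * (1 - t ^ (((n : ℝ) - m') / ((m' : ℝ) - m))) := by
  obtain ⟨d, rfl⟩ : ∃ d, m' = m + d := ⟨m' - m, by omega⟩
  obtain ⟨k, rfl⟩ : ∃ k, n = m + d + k := ⟨n - (m + d), by omega⟩
  have hgeo' : ∀ i, m ≤ i → i + 1 < m + d + k → a (i + 1) = c * a i :=
    fun i hi hin => hgeo i (hm.trans hi) (by omega)
  have ham : a m ≠ 0 := (hpos m hm (by omega)).ne'
  have hd : d ≠ 0 := by omega
  have hcd : c ^ d ≤ t := by
    rwa [eq_pow_mul_of_geometric hgeo' d (by omega), mul_div_assoc, div_self ham, mul_one]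
      at hratio
  have ht0 : 0 ≤ t := (pow_nonneg hc0.le d).trans hcd
  set s := t ^ (d : ℝ)⁻¹
  have hsd : s ^ d = t := Real.rpow_inv_natCast_pow ht0 hd
  have hsk : s ^ k = t ^ ((k : ℝ) / d) := by
    rw [← Real.rpow_natCast, ← Real.rpow_mul ht0, inv_mul_eq_div]
  have hcs : c ≤ s :=
    (pow_le_pow_iff_left₀ hc0.le (Real.rpow_nonneg ht0 _) hd).1 (hsd.symm ▸ hcd)
  have hs1 : s ≠ 1 := by rintro hs; rw [hs, one_pow] at hsd; linarith
  have hexp : (((m + d + k : ℕ) : ℝ) - (m + d : ℕ)) / (((m + d : ℕ) : ℝ) - m) = k / d := by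
    push_cast; ring_nf
  calc (∑ i ∈ Ico (m + d) (m + d + k), a i) / ∑ i ∈ Ico m (m + d), a i
      = geomTailRatio d k c := sum_Ico_div_sum_Ico_eq_geomTailRatio hgeo' ham le_rfl
    _ ≤ geomTailRatio d k s := geomTailRatio_mono hc0.le hcs d k
    _ = _ := by rw [geomTailRatio_eq hs1, hsd, hsk, hexp]

theorem stmt10 (n : ℕ) (hn : 3 ≤ n) (a : ℕ → ℝ) (c : ℝ) (hc0 : 0 < c) (hc1 : c < 1)
    (hpos : ∀ i, 1 ≤ i → i ≤ n - 1 → 0 < a i)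
    (hgeo : ∀ i, 1 ≤ i → i + 1 ≤ n - 1 → a (i + 1) = c * a i)
    (m m' : ℕ) (hm : 1 ≤ m) (hmm' : m < m') (hm'n : m' ≤ n - 1)
    (t : ℝ) (ht : t < 1) (hratio : a m' / a m ≤ t) :
    (∑ i ∈ Finset.Ico m' n, a i) / (∑ i ∈ Finset.Ico m m', a i)
      ≤ t / (1 - t) * (1 - t ^ (((n : ℝ) - m') / ((m' : ℝ) - m))) :=
  stmt10_general n a c hc0 hpos hgeo m m' hm hmm' hm'n t ht hratio
end

section
/- Let n ∈ ℕ ∪ {∞} and let {a_i}_{i=1}^{n−1} be a positive nonincreasing sequence such that the ratio sequence {a_{i+1}/a_i}_{i=1}^{n−2} is also nonincreasing (if n = ∞ assume additionally Σ a_i < ∞). Let m, m' be integers with 1 ≤ m < m' ≤ n−1 and let t < 1 satisfy a_{m'}/a_m ≤ t. Then (Σ_{i=m'}^{n−1} a_i) / (Σ_{i=m}^{m'−1} a_i) ≤ t/(1−t) if n − m' > m' − m, and ≤ t otherwise. -/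
open Finset

theorem stmt12 (n : ℕ∞) (a : ℕ → ℝ)
    (hpos : ∀ i, 1 ≤ i → ((i : ℕ) : ℕ∞) < n → 0 < a i)
    (hmono : ∀ i, 1 ≤ i → (((i + 1 : ℕ)) : ℕ∞) < n → a (i + 1) ≤ a i)
    (hratiomono : ∀ i, 1 ≤ i → (((i + 2 : ℕ)) : ℕ∞) < n →
      a (i + 2) / a (i + 1) ≤ a (i + 1) / a i)
    (hsum : n = ⊤ → Summable a)
    (m m' : ℕ) (hm : 1 ≤ m) (hmm' : m < m') (hm'n : ((m' : ℕ) : ℕ∞) < n)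
    (t : ℝ) (ht : t < 1) (hratio : a m' / a m ≤ t) :
    (n - (m' : ℕ∞) > (m' : ℕ∞) - (m : ℕ∞) →
      (∑' i : {i : ℕ // m' ≤ i ∧ ((i : ℕ) : ℕ∞) < n}, a i) /
          (∑ i ∈ Finset.Ico m m', a i) ≤ t / (1 - t)) ∧
    (¬(n - (m' : ℕ∞) > (m' : ℕ∞) - (m : ℕ∞)) →
      (∑' i : {i : ℕ // m' ≤ i ∧ ((i : ℕ) : ℕ∞) < n}, a i) /
          (∑ i ∈ Finset.Ico m m', a i) ≤ t) := by
  set k := m' - m with hk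
  have hmk : m' = m + k := by omega
  have hkpos : 1 ≤ k := by omega
  have hmn : ((m : ℕ) : ℕ∞) < n := lt_trans (by exact_mod_cast hmm') hm'n
  have ham : 0 < a m := hpos m hm hmn
  have ham' : 0 < a m' := hpos m' (by omega) hm'n
  have ht0 : 0 < t := lt_of_lt_of_le (div_pos ham' ham) hratio
  have h1t : 0 < 1 - t := by linarith
  -- S > 0
  have hSterm : ∀ i ∈ Finset.Ico m m', 0 < a i := by
    intro i hi
    rw [Finset.mem_Ico] at hi
    exact hpos i (by omega) (lt_trans (by exact_mod_cast hi.2) hm'n)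
  have hS : 0 < ∑ i ∈ Finset.Ico m m', a i :=
    Finset.sum_pos hSterm ⟨m, Finset.mem_Ico.mpr ⟨le_refl m, hmm'⟩⟩
  -- ratio chain
  have L1 : ∀ j i, 1 ≤ i → i ≤ j → (((j + 1 : ℕ)) : ℕ∞) < n →
      a (j + 1) / a j ≤ a (i + 1) / a i := by
    intro j
    induction j with
    | zero => intro i h1 h2 _; omega
    | succ j ih =>
      intro i h1 h2 hjn
      rcases eq_or_lt_of_le h2 with rfl | h2'
      · exact le_refl _
      · have hij : i ≤ j := by omega
        have hj1 : 1 ≤ j := le_trans h1 hij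
        have hstep := hratiomono j hj1 (by exact_mod_cast hjn)
        have hj1n : (((j + 1 : ℕ)) : ℕ∞) < n :=
          lt_of_le_of_lt (by exact_mod_cast Nat.le_succ (j + 1)) hjn
        exact le_trans hstep (ih i h1 hij hj1n)
  have L2 : ∀ d i, m ≤ i → (((i + d : ℕ)) : ℕ∞) < n →
      a (i + d) / a i ≤ a (m + d) / a m := by
    intro d
    induction d with
    | zero =>
      intro i hi hin
      have hai : 0 < a i := hpos i (by omega) (by simpa using hin)
      simp only [Nat.add_zero]
      rw [div_self (ne_of_gt hai), div_self (ne_of_gt ham)]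
    | succ d ih =>
      intro i hi hin
      have hin' : (((i + d : ℕ)) : ℕ∞) < n :=
        lt_of_le_of_lt (by exact_mod_cast Nat.le_succ (i + d)) hin
      have hiin : ((i : ℕ) : ℕ∞) < n :=
        lt_of_le_of_lt (by exact_mod_cast Nat.le_add_right i d) hin'
      have haipos : 0 < a i := hpos i (by omega) hiin
      have hidpos : 0 < a (i + d) := hpos _ (by omega) hin'
      have hmdn : (((m + d : ℕ)) : ℕ∞) < n :=
        lt_of_le_of_lt (by exact_mod_cast Nat.add_le_add_right hi d) hin'
      have hmd1n : (((m + d + 1 : ℕ)) : ℕ∞) < n :=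
        lt_of_le_of_lt (Nat.cast_le.mpr (by omega : m + d + 1 ≤ i + (d + 1))) hin
      have hmdpos : 0 < a (m + d) := hpos _ (by omega) hmdn
      have hmd1pos : 0 < a (m + d + 1) := hpos _ (by omega) hmd1n
      have hstep : a (i + d + 1) / a (i + d) ≤ a (m + d + 1) / a (m + d) :=
        L1 (i + d) (m + d) (by omega) (by omega) (by exact_mod_cast hin)
      have hIH : a (i + d) / a i ≤ a (m + d) / a m := ih i hi hin'
      have heq1 : a (i + (d + 1)) / a i = (a (i + d + 1) / a (i + d)) * (a (i + d) / a i) := by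
        rw [show i + (d + 1) = i + d + 1 from rfl]
        field_simp
      have heq2 : a (m + (d + 1)) / a m = (a (m + d + 1) / a (m + d)) * (a (m + d) / a m) := by
        rw [show m + (d + 1) = m + d + 1 from rfl]
        field_simp
      rw [heq1, heq2]
      exact mul_le_mul hstep hIH (le_of_lt (div_pos hidpos haipos))
        (le_of_lt (div_pos hmd1pos hmdpos))
  have key : ∀ i, m ≤ i → (((i + k : ℕ)) : ℕ∞) < n → a (i + k) ≤ t * a i := by
    intro i hi hin
    have hiin : ((i : ℕ) : ℕ∞) < n :=
      lt_of_le_of_lt (by exact_mod_cast Nat.le_add_right i k) hin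
    have haipos : 0 < a i := hpos i (by omega) hiin
    have h2 := L2 k i hi hin
    rw [← hmk] at h2
    have := le_trans h2 hratio
    rwa [div_le_iff₀ haipos] at this
  rcases eq_or_ne n ⊤ with rfl | hne
  · -- infinite case
    have hsa : Summable a := hsum rfl
    have hsm' : Summable (fun i => a (i + m')) := (summable_nat_add_iff m').mpr hsa
    have hsm : Summable (fun i => a (i + m)) := (summable_nat_add_iff m).mpr hsa
    have hT : (∑' i : {i : ℕ // m' ≤ i ∧ ((i : ℕ) : ℕ∞) < (⊤ : ℕ∞)}, a i)
        = ∑' i, a (i + m') :=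
      (Equiv.tsum_eq
        (⟨fun i => ⟨i + m', ⟨Nat.le_add_left _ _, WithTop.coe_lt_top _⟩⟩,
          fun x => x.1 - m', fun i => by simp,
          fun x => Subtype.ext (by have := x.2.1; simp; omega)⟩ :
          ℕ ≃ {i : ℕ // m' ≤ i ∧ ((i : ℕ) : ℕ∞) < ⊤})
        (fun x => a x.1)).symm
    set T := ∑' i, a (i + m') with hTdef
    have hTle : T ≤ t * ∑' i, a (i + m) := by
      rw [← tsum_mul_left]
      refine Summable.tsum_le_tsum ?_ hsm' (hsm.mul_left t)
      intro i
      have : i + m' = (i + m) + k := by omega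
      rw [this]
      exact key (i + m) (by omega) (WithTop.coe_lt_top _)
    have hsplit : (∑' i, a (i + m)) = (∑ i ∈ Finset.Ico m m', a i) + T := by
      rw [← Summable.sum_add_tsum_nat_add k hsm]
      congr 1
      · rw [Finset.sum_Ico_eq_sum_range]
        refine Finset.sum_congr (by rw [hk]) (fun i _ => by rw [add_comm])
      · exact tsum_congr (fun i => by rw [show i + k + m = i + m' by omega])
    rw [hsplit] at hTle
    constructor
    · intro _
      rw [hT, div_le_div_iff₀ hS h1t]
      rw [mul_add] at hTle
      nlinarith [hS, ht0]
    · intro hcon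
      exfalso
      apply hcon
      rw [ENat.top_sub_coe, ← ENat.coe_sub]
      exact WithTop.coe_lt_top _
  · -- finite case
    obtain ⟨N, rfl⟩ : ∃ N : ℕ, n = (N : ℕ∞) := by
      cases n with
      | top => exact absurd rfl hne
      | coe N => exact ⟨N, rfl⟩
    have hm'N : m' < N := by exact_mod_cast hm'n
    have hkN : k < N := by omega
    have hT : (∑' i : {i : ℕ // m' ≤ i ∧ ((i : ℕ) : ℕ∞) < (N : ℕ∞)}, a i)
        = ∑ i ∈ Finset.Ico m' N, a i := by
      rw [← Finset.tsum_subtype]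
      have hiff : ∀ x : ℕ, (m' ≤ x ∧ ((x : ℕ) : ℕ∞) < (N : ℕ∞)) ↔ x ∈ Finset.Ico m' N := by
        intro x
        rw [Finset.mem_Ico]
        exact ⟨fun h => ⟨h.1, by exact_mod_cast h.2⟩, fun h => ⟨h.1, by exact_mod_cast h.2⟩⟩
      exact Equiv.tsum_eq (Equiv.subtypeEquivRight hiff) (fun x => a x.1)
    rw [hT]
    set T := ∑ i ∈ Finset.Ico m' N, a i with hTdef
    have hTnonneg : ∀ i ∈ Finset.Ico m' N, 0 ≤ a i := by
      intro i hi
      rw [Finset.mem_Ico] at hi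
      exact le_of_lt (hpos i (by omega) (by exact_mod_cast hi.2))
    have hshift : T ≤ t * ∑ i ∈ Finset.Ico m (N - k), a i := by
      have h1 : (∑ i ∈ Finset.Ico m (N - k), a (i + k)) = T := by
        rw [Finset.sum_Ico_add' a m (N - k) k, show m + k = m' from hmk.symm,
          show N - k + k = N by omega]
      calc T = ∑ i ∈ Finset.Ico m (N - k), a (i + k) := h1.symm
        _ ≤ ∑ i ∈ Finset.Ico m (N - k), t * a i := by
            refine Finset.sum_le_sum (fun i hi => ?_)
            rw [Finset.mem_Ico] at hi
            exact key i hi.1 (by exact_mod_cast show i + k < N by omega)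
        _ = t * ∑ i ∈ Finset.Ico m (N - k), a i := by rw [Finset.mul_sum]
    constructor
    · intro hlong
      have hlong' : m' - m < N - m' := by
        rw [← ENat.coe_sub, ← ENat.coe_sub] at hlong
        exact_mod_cast hlong
      have hm'Nk : m' ≤ N - k := by omega
      have hsplit : (∑ i ∈ Finset.Ico m (N - k), a i)
          = (∑ i ∈ Finset.Ico m m', a i) + ∑ i ∈ Finset.Ico m' (N - k), a i :=
        (Finset.sum_Ico_consecutive a (le_of_lt hmm') hm'Nk).symm
      have hsub : (∑ i ∈ Finset.Ico m' (N - k), a i) ≤ T :=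
        Finset.sum_le_sum_of_subset_of_nonneg
          (Finset.Ico_subset_Ico (le_refl m') (by omega)) (fun i hi _ => hTnonneg i hi)
      have hTle : T ≤ t * ((∑ i ∈ Finset.Ico m m', a i) + T) :=
        hshift.trans (by
          rw [hsplit]
          exact mul_le_mul_of_nonneg_left (by linarith) (le_of_lt ht0))
      rw [div_le_div_iff₀ hS h1t]
      rw [mul_add] at hTle
      nlinarith [hS, ht0]
    · intro hshort
      have hshort' : N - m' ≤ m' - m := by
        rw [← ENat.coe_sub, ← ENat.coe_sub] at hshort
        push_neg at hshort
        exact_mod_cast hshort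
      have hNk : N - k ≤ m' := by omega
      have hsub : (∑ i ∈ Finset.Ico m (N - k), a i) ≤ ∑ i ∈ Finset.Ico m m', a i :=
        Finset.sum_le_sum_of_subset_of_nonneg
          (Finset.Ico_subset_Ico (le_refl m) hNk) (fun i hi _ => le_of_lt (hSterm i hi))
      rw [div_le_iff₀ hS]
      calc T ≤ t * ∑ i ∈ Finset.Ico m (N - k), a i := hshift
        _ ≤ t * ∑ i ∈ Finset.Ico m m', a i :=
            mul_le_mul_of_nonneg_left hsub (le_of_lt ht0)
end

section
/- Let m, m', s, n be integers with 1 ≤ m < m' < s < n, and let p be a real number with p ≥ 1 and p < 2s. Define c = (s−1)^{p+1}/s^{p+1} and the sequence {a_i}_{i=m}^{n−1} by a_i = 1/i^{p+1} for m ≤ i ≤ s, and a_i = c^{i−s}/s^{p+1} for s ≤ i ≤ n−1. Let t < 1 satisfy a_{m'}/a_m ≤ t. Then (Σ_{i=m'}^{n−1} a_i) / (Σ_{i=m}^{m'−1} a_i) ≤ [ 1 + p/m' − (m'/s)^p·( 1 + p/s − (p/(p+1))·(1/(1 − p/(2s))) ) ] / ( t^{−p/(p+1)} − 1 ). -/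
/-!
Compare the sums with integrals of `x ^ (-(p + 1))`: the tangent-line inequality for the convex
function `x ↦ x ^ (-p)` gives
`p (i + 1) ^ (-(p + 1)) ≤ i ^ (-p) - (i + 1) ^ (-p) ≤ p i ^ (-(p + 1))`,
so the denominator is at least `(m ^ (-p) - m' ^ (-p)) / p` and the polynomial part of the
numerator at most `(m' ^ (-p) (1 + p / m') - s ^ (-p) (1 + p / s)) / p`. The geometric part is at
most `s ^ (-(p + 1)) / (1 - c)`, and the second-order Taylor bound
`(1 - x) ^ (p + 1) ≤ 1 - (p + 1) x + (p + 1) p x ^ 2 / 2` at `x = 1 / s` gives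
`1 - c ≥ (p + 1) / s * (1 - p / (2 s))`. Finally `t ≥ (m / m') ^ (p + 1)` turns into
`t ^ (-(p / (p + 1))) - 1 ≤ m' ^ p (m ^ (-p) - m' ^ (-p))`.
-/

open Finset

theorem one_add_mul_self_le_rpow_one_add_of_nonpos {s : ℝ} (hs : -1 < s) {p : ℝ} (hp : p ≤ 0) :
    1 + p * s ≤ (1 + s) ^ p := by
  have hpos : 0 < 1 + s := by linarith
  have hlog : Real.log (1 + s) ≤ s := by linarith [Real.log_le_sub_one_of_pos hpos]
  calc 1 + p * s ≤ Real.log (1 + s) * p + 1 := by nlinarith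
    _ ≤ Real.exp (Real.log (1 + s) * p) := Real.add_one_le_exp _
    _ = (1 + s) ^ p := (Real.rpow_def_of_pos hpos p).symm

theorem rpow_add_mul_sub_le_rpow_of_nonpos {x y q : ℝ} (hx : 0 < x) (hy : 0 < y) (hq : q ≤ 0) :
    x ^ q + q * x ^ (q - 1) * (y - x) ≤ y ^ q := by
  have key := one_add_mul_self_le_rpow_one_add_of_nonpos (s := y / x - 1)
    (by linarith [div_pos hy hx]) hq
  rw [add_sub_cancel, Real.div_rpow hy.le hx.le, le_div_iff₀ (Real.rpow_pos_of_pos hx q)] at key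
  rw [Real.rpow_sub_one hx.ne']
  calc x ^ q + q * (x ^ q / x) * (y - x) = (1 + q * (y / x - 1)) * x ^ q := by
        field_simp
    _ ≤ y ^ q := key

theorem rpow_neg_sub_rpow_neg_add_one_le {x p : ℝ} (hx : 0 < x) (hp : 0 ≤ p) :
    x ^ (-p) - (x + 1) ^ (-p) ≤ p * x ^ (-(p + 1)) := by
  have := rpow_add_mul_sub_le_rpow_of_nonpos hx (by linarith : 0 < x + 1) (neg_nonpos.2 hp)
  rw [show -p - 1 = -(p + 1) by ring] at this
  linarith

theorem mul_rpow_neg_add_one_le_rpow_neg_sub {x p : ℝ} (hx : 0 < x) (hp : 0 ≤ p) :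
    p * (x + 1) ^ (-(p + 1)) ≤ x ^ (-p) - (x + 1) ^ (-p) := by
  have := rpow_add_mul_sub_le_rpow_of_nonpos (by linarith : 0 < x + 1) hx (neg_nonpos.2 hp)
  rw [show -p - 1 = -(p + 1) by ring] at this
  linarith

theorem sum_Ico_rpow_neg_sub {p : ℝ} {a b : ℕ} (hab : a ≤ b) :
    ∑ i ∈ Ico a b, ((i : ℝ) ^ (-p) - ((i : ℝ) + 1) ^ (-p)) = (a : ℝ) ^ (-p) - (b : ℝ) ^ (-p) := by
  rw [← neg_sub, ← sum_Ico_sub (fun i : ℕ ↦ (i : ℝ) ^ (-p)) hab, ← sum_neg_distrib]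
  push_cast
  simp only [neg_sub]

theorem sub_rpow_neg_le_mul_sum_rpow_neg {p : ℝ} {a b : ℕ} (ha : 0 < a) (hab : a ≤ b)
    (hp : 0 ≤ p) :
    (a : ℝ) ^ (-p) - (b : ℝ) ^ (-p) ≤ p * ∑ i ∈ Ico a b, (i : ℝ) ^ (-(p + 1)) := by
  rw [← sum_Ico_rpow_neg_sub hab, mul_sum]
  exact sum_le_sum fun i hi ↦ rpow_neg_sub_rpow_neg_add_one_le
    (Nat.cast_pos.2 (ha.trans_le (mem_Ico.1 hi).1)) hp

theorem mul_sum_rpow_neg_succ_le_sub_rpow_neg {p : ℝ} {a b : ℕ} (ha : 0 < a) (hab : a ≤ b)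
    (hp : 0 ≤ p) :
    p * ∑ i ∈ Ico a b, ((i : ℝ) + 1) ^ (-(p + 1)) ≤ (a : ℝ) ^ (-p) - (b : ℝ) ^ (-p) := by
  rw [← sum_Ico_rpow_neg_sub hab, mul_sum]
  exact sum_le_sum fun i hi ↦ mul_rpow_neg_add_one_le_rpow_neg_sub
    (Nat.cast_pos.2 (ha.trans_le (mem_Ico.1 hi).1)) hp

theorem sum_Ico_add_eq_add_sum_Ico_succ {M : Type*} [AddCommMonoid M] (f : ℕ → M) {a b : ℕ}
    (hab : a ≤ b) : ∑ i ∈ Ico a b, f i + f b = f a + ∑ i ∈ Ico a b, f (i + 1) := by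
  rw [← sum_Ico_succ_top hab, sum_eq_sum_Ico_succ_bot (Nat.lt_succ_of_le hab), sum_Ico_add']

theorem mul_sum_Ico_rpow_neg_le {p : ℝ} {a b : ℕ} (ha : 0 < a) (hab : a ≤ b) (hp : 0 ≤ p) :
    p * ∑ i ∈ Ico a b, (i : ℝ) ^ (-(p + 1))
      ≤ (a : ℝ) ^ (-p) * (1 + p / a) - (b : ℝ) ^ (-p) * (1 + p / b) := by
  have hpow : ∀ x : ℝ, 0 < x → x ^ (-(p + 1)) = x ^ (-p) / x := fun x hx ↦ by
    rw [← Real.rpow_sub_one hx.ne']; ring_nf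
  have hshift := sum_Ico_add_eq_add_sum_Ico_succ (fun i : ℕ ↦ (i : ℝ) ^ (-(p + 1))) hab
  push_cast at hshift
  calc p * ∑ i ∈ Ico a b, (i : ℝ) ^ (-(p + 1))
      = p * (a : ℝ) ^ (-(p + 1)) + p * ∑ i ∈ Ico a b, ((i : ℝ) + 1) ^ (-(p + 1))
          - p * (b : ℝ) ^ (-(p + 1)) := by linear_combination p * hshift
    _ ≤ p * (a : ℝ) ^ (-(p + 1)) + ((a : ℝ) ^ (-p) - (b : ℝ) ^ (-p))
          - p * (b : ℝ) ^ (-(p + 1)) := by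
        gcongr
        exact mul_sum_rpow_neg_succ_le_sub_rpow_neg ha hab hp
    _ = _ := by
        rw [hpow a (Nat.cast_pos.2 ha), hpow b (Nat.cast_pos.2 (ha.trans_le hab))]
        ring

theorem one_sub_rpow_le_quadratic {x q : ℝ} (hx₀ : 0 ≤ x) (hx₁ : x ≤ 1) (hq : 2 ≤ q) :
    (1 - x) ^ q ≤ 1 - q * x + q * (q - 1) / 2 * x ^ 2 := by
  let g : ℝ → ℝ := fun u ↦ 1 - q * u + q * (q - 1) / 2 * u ^ 2 - (1 - u) ^ q
  have hg : ∀ u, HasDerivAt g (q * ((1 - u) ^ (q - 1) - (1 - (q - 1) * u))) u := fun u ↦ by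
    have h := ((hasDerivAt_id u).const_sub 1).rpow_const (p := q) (Or.inr (by linarith))
    have := ((((hasDerivAt_id u).const_mul q).const_sub 1).add
      ((hasDerivAt_pow 2 u).const_mul (q * (q - 1) / 2))).sub h
    exact this.congr_deriv (by simp only [id, mul_one]; ring)
  have hmono : MonotoneOn g (Set.Icc 0 1) := by
    refine monotoneOn_of_hasDerivWithinAt_nonneg (convex_Icc 0 1)
      (fun u _ ↦ (hg u).continuousAt.continuousWithinAt) (fun u _ ↦ (hg u).hasDerivWithinAt)
      fun u hu ↦ ?_
    rw [interior_Icc] at hu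
    have := one_add_mul_self_le_rpow_one_add (s := -u) (by linarith [hu.2])
      (p := q - 1) (by linarith)
    rw [← sub_eq_add_neg] at this
    nlinarith
  have key : g 0 ≤ g x := hmono ⟨le_rfl, zero_le_one⟩ ⟨hx₀, hx₁⟩ hx₀
  dsimp only [g] at key
  rw [sub_zero, Real.one_rpow] at key
  linarith

theorem sum_Ico_pow_sub_le_one_div {K : Type*} [Field K] [LinearOrder K] [IsStrictOrderedRing K]
    {c : K} (hc₀ : 0 ≤ c) (hc₁ : c < 1) (s n : ℕ) :
    ∑ i ∈ Ico s n, c ^ (i - s) ≤ 1 / (1 - c) := by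
  rw [sum_Ico_eq_sum_range, range_eq_Ico]
  simp only [Nat.add_sub_cancel_left]
  simpa using geom_sum_Ico_le_of_lt_one (m := 0) (n := n - s) hc₀ hc₁

theorem mul_sum_Ico_geometric_le {p c : ℝ} {s : ℕ} (hs : 1 ≤ s) (hp : 1 ≤ p)
    (hps : p < 2 * (s : ℝ)) (hc : c = ((s : ℝ) - 1) ^ (p + 1) / (s : ℝ) ^ (p + 1)) (n : ℕ) :
    p * ∑ i ∈ Ico s n, c ^ (i - s) * (s : ℝ) ^ (-(p + 1))
      ≤ (s : ℝ) ^ (-p) * (p / (p + 1) * (1 / (1 - p / (2 * (s : ℝ))))) := by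
  have hs₀ : (0 : ℝ) < s := by exact_mod_cast hs
  have hs₁ : (1 : ℝ) ≤ s := by exact_mod_cast hs
  replace hc : c = (1 - 1 / (s : ℝ)) ^ (p + 1) := by
    rw [hc, ← Real.div_rpow (by linarith) hs₀.le]
    congr 1
    field_simp
  have hc₀ : 0 ≤ c := hc ▸ Real.rpow_nonneg (by rw [sub_nonneg, div_le_one hs₀]; exact hs₁) _
  have hδ₀ : 0 < (p + 1) / s * (1 - p / (2 * s)) := by
    have : p / (2 * s) < 1 := (div_lt_one (by positivity)).2 hps
    have : 0 < p + 1 := by linarith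
    have : 0 < 1 - p / (2 * s) := by linarith
    positivity
  have hδ : (p + 1) / s * (1 - p / (2 * s)) ≤ 1 - c := by
    have := one_sub_rpow_le_quadratic (x := 1 / (s : ℝ)) (by positivity)
      ((div_le_one hs₀).2 hs₁) (by linarith : 2 ≤ p + 1)
    rw [hc]
    have e : (p + 1) / s * (1 - p / (2 * s))
        = (p + 1) * (1 / s) - (p + 1) * (p + 1 - 1) / 2 * (1 / (s : ℝ)) ^ 2 := by
      field_simp; ring
    linarith
  have hgeom : ∑ i ∈ Ico s n, c ^ (i - s) ≤ 1 / ((p + 1) / s * (1 - p / (2 * s))) :=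
    (sum_Ico_pow_sub_le_one_div hc₀ (by linarith) s n).trans (one_div_le_one_div_of_le hδ₀ hδ)
  calc p * ∑ i ∈ Ico s n, c ^ (i - s) * (s : ℝ) ^ (-(p + 1))
      = p * (s : ℝ) ^ (-(p + 1)) * ∑ i ∈ Ico s n, c ^ (i - s) := by rw [← sum_mul]; ring
    _ ≤ p * (s : ℝ) ^ (-(p + 1)) * (1 / ((p + 1) / s * (1 - p / (2 * s)))) := by gcongr
    _ = (s : ℝ) ^ (-p) * (p / (p + 1) * (1 / (1 - p / (2 * (s : ℝ))))) := by
      rw [show -(p + 1) = -p - 1 by ring, Real.rpow_sub_one hs₀.ne']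
      field_simp

theorem rpow_neg_div_add_one_le {r t p : ℝ} (hr : 0 < r) (hp : 0 ≤ p) (h : r ^ (-(p + 1)) ≤ t) :
    t ^ (-(p / (p + 1))) ≤ r ^ p := by
  calc t ^ (-(p / (p + 1))) ≤ (r ^ (-(p + 1))) ^ (-(p / (p + 1))) :=
        Real.rpow_le_rpow_of_nonpos (by positivity) h (neg_nonpos.2 (by positivity))
    _ = r ^ p := by
      rw [← Real.rpow_mul hr.le]
      congr 1
      field_simp

theorem rpow_mul_rpow_neg {x y : ℝ} (hx : 0 ≤ x) (hy : 0 ≤ y) (p : ℝ) :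
    x ^ p * y ^ (-p) = (x / y) ^ p := by
  rw [Real.rpow_neg hy, Real.div_rpow hx hy, div_eq_mul_inv]

theorem rpow_mul_sum_tail_le {p c : ℝ} {m' s : ℕ} (hm' : 0 < m') (hm's : m' ≤ s) (hp : 1 ≤ p)
    (hps : p < 2 * (s : ℝ)) (hc : c = ((s : ℝ) - 1) ^ (p + 1) / (s : ℝ) ^ (p + 1)) (n : ℕ) :
    (m' : ℝ) ^ p * p * (∑ i ∈ Ico m' s, (i : ℝ) ^ (-(p + 1))
        + ∑ i ∈ Ico s n, c ^ (i - s) * (s : ℝ) ^ (-(p + 1)))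
      ≤ 1 + p / (m' : ℝ) - ((m' : ℝ) / (s : ℝ)) ^ p *
          (1 + p / (s : ℝ) - p / (p + 1) * (1 / (1 - p / (2 * (s : ℝ))))) := by
  have hm'₀ : (0 : ℝ) < m' := Nat.cast_pos.2 hm'
  have head := mul_sum_Ico_rpow_neg_le (p := p) hm' hm's (by linarith)
  have tail := mul_sum_Ico_geometric_le (hm'.trans_le hm's) hp hps hc n
  calc (m' : ℝ) ^ p * p * (∑ i ∈ Ico m' s, (i : ℝ) ^ (-(p + 1))
        + ∑ i ∈ Ico s n, c ^ (i - s) * (s : ℝ) ^ (-(p + 1)))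
      ≤ (m' : ℝ) ^ p * ((m' : ℝ) ^ (-p) * (1 + p / m') - (s : ℝ) ^ (-p) * (1 + p / s)
          + (s : ℝ) ^ (-p) * (p / (p + 1) * (1 / (1 - p / (2 * (s : ℝ)))))) := by
        rw [mul_assoc, mul_add]
        exact mul_le_mul_of_nonneg_left (add_le_add head tail) (by positivity)
    _ = _ := by
        rw [mul_add, mul_sub, ← mul_assoc, ← mul_assoc, ← mul_assoc,
          rpow_mul_rpow_neg hm'₀.le hm'₀.le, rpow_mul_rpow_neg hm'₀.le (Nat.cast_nonneg s),
          div_self hm'₀.ne', Real.one_rpow]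
        ring

theorem rpow_neg_div_sub_one_le_rpow_mul_sum {p t : ℝ} {m m' : ℕ} (hm : 0 < m) (hmm' : m ≤ m')
    (hp : 0 ≤ p) (ht : ((m' : ℝ) / m) ^ (-(p + 1)) ≤ t) :
    t ^ (-(p / (p + 1))) - 1 ≤ (m' : ℝ) ^ p * p * ∑ i ∈ Ico m m', (i : ℝ) ^ (-(p + 1)) := by
  have hm₀ : (0 : ℝ) < m := Nat.cast_pos.2 hm
  have hm'₀ : (0 : ℝ) < m' := Nat.cast_pos.2 (hm.trans_le hmm')
  calc t ^ (-(p / (p + 1))) - 1 ≤ ((m' : ℝ) / m) ^ p - 1 := by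
        linarith [rpow_neg_div_add_one_le (div_pos hm'₀ hm₀) hp ht]
    _ = (m' : ℝ) ^ p * ((m : ℝ) ^ (-p) - (m' : ℝ) ^ (-p)) := by
        rw [mul_sub, rpow_mul_rpow_neg hm'₀.le hm₀.le, rpow_mul_rpow_neg hm'₀.le hm'₀.le,
          div_self hm'₀.ne', Real.one_rpow]
    _ ≤ (m' : ℝ) ^ p * (p * ∑ i ∈ Ico m m', (i : ℝ) ^ (-(p + 1))) := by
        gcongr
        exact sub_rpow_neg_le_mul_sum_rpow_neg hm hmm' hp
    _ = _ := (mul_assoc _ _ _).symm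

theorem ite_rpow_eq_pow_mul_rpow_neg {p c : ℝ} {s i : ℕ} (hsi : s ≤ i) :
    (if i ≤ s then 1 / (i : ℝ) ^ (p + 1) else c ^ (i - s) / (s : ℝ) ^ (p + 1))
      = c ^ (i - s) * (s : ℝ) ^ (-(p + 1)) := by
  rw [Real.rpow_neg (Nat.cast_nonneg s), ← div_eq_mul_inv]
  split_ifs with h
  · obtain rfl : i = s := le_antisymm h hsi
    simp
  · rfl

theorem div_le_div_of_le_mul_of_mul_le {T B D L N : ℝ} (hT : 0 ≤ T) (hB : 0 < B) (hD : 0 < D)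
    (hDB : D ≤ L * B) (hTN : L * T ≤ N) : T / B ≤ N / D := by
  rw [div_le_div_iff₀ hB hD]
  calc T * D ≤ T * (L * B) := mul_le_mul_of_nonneg_left hDB hT
    _ = L * T * B := by ring
    _ ≤ N * B := mul_le_mul_of_nonneg_right hTN hB.le

theorem stmt13 (m m' s n : ℕ) (hm : 1 ≤ m) (hmm' : m < m') (hm's : m' < s) (hsn : s < n)
    (p : ℝ) (hp : 1 ≤ p) (hps : p < 2 * (s : ℝ))
    (c : ℝ) (hc : c = ((s : ℝ) - 1) ^ (p + 1) / (s : ℝ) ^ (p + 1))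
    (a : ℕ → ℝ)
    (ha : ∀ i, m ≤ i → i ≤ n - 1 →
      a i = if i ≤ s then 1 / (i : ℝ) ^ (p + 1) else c ^ (i - s) / (s : ℝ) ^ (p + 1))
    (t : ℝ) (ht : t < 1) (hratio : a m' / a m ≤ t) :
    (∑ i ∈ Finset.Ico m' n, a i) / (∑ i ∈ Finset.Ico m m', a i)
      ≤ (1 + p / (m' : ℝ)
          - ((m' : ℝ) / (s : ℝ)) ^ p *
            (1 + p / (s : ℝ) - p / (p + 1) * (1 / (1 - p / (2 * (s : ℝ))))))
        / (t ^ (-(p / (p + 1))) - 1) := by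
  have ha_pow : ∀ i, m ≤ i → i ≤ s → a i = (i : ℝ) ^ (-(p + 1)) := fun i h₁ h₂ ↦ by
    rw [ha i h₁ (by omega), if_pos h₂, Real.rpow_neg (Nat.cast_nonneg i), one_div]
  have hB : ∑ i ∈ Ico m m', a i = ∑ i ∈ Ico m m', (i : ℝ) ^ (-(p + 1)) :=
    sum_congr rfl fun i hi ↦ ha_pow i (mem_Ico.1 hi).1 (by have := (mem_Ico.1 hi).2; omega)
  have hT : ∑ i ∈ Ico m' n, a i = ∑ i ∈ Ico m' s, (i : ℝ) ^ (-(p + 1))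
      + ∑ i ∈ Ico s n, c ^ (i - s) * (s : ℝ) ^ (-(p + 1)) := by
    rw [← sum_Ico_consecutive a hm's.le hsn.le]
    congr 1 <;> refine sum_congr rfl fun i hi ↦ ?_ <;> obtain ⟨h₁, h₂⟩ := mem_Ico.1 hi
    · exact ha_pow i (by omega) h₂.le
    · rw [ha i (by omega) (by omega), ite_rpow_eq_pow_mul_rpow_neg h₁]
  have hratio' : ((m' : ℝ) / m) ^ (-(p + 1)) ≤ t := by
    rwa [ha_pow m le_rfl (by omega), ha_pow m' hmm'.le hm's.le,
      ← Real.div_rpow (Nat.cast_nonneg m') (Nat.cast_nonneg m)] at hratio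
  have hm₀ : (0 : ℝ) < m := Nat.cast_pos.2 hm
  have hm'₀ : (0 : ℝ) < m' := Nat.cast_pos.2 (by omega)
  have ht₀ : 0 < t := hratio'.trans_lt' (Real.rpow_pos_of_pos (div_pos hm'₀ hm₀) _)
  refine div_le_div_of_le_mul_of_mul_le ?_ ?_ ?_ ?_ ?_ (L := (m' : ℝ) ^ p * p)
  · have hs : (0 : ℝ) ≤ s - 1 := sub_nonneg.2 (Nat.one_le_cast.2 (by omega))
    have hc₀ : 0 ≤ c := hc ▸ by positivity
    rw [hT]
    positivity
  · rw [hB]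
    exact sum_pos
      (fun i hi ↦ Real.rpow_pos_of_pos (hm₀.trans_le (Nat.cast_le.2 (mem_Ico.1 hi).1)) _)
      (nonempty_Ico.2 hmm')
  · have := Real.one_lt_rpow_of_pos_of_lt_one_of_neg ht₀ ht
      (neg_neg_of_pos (div_pos (by linarith) (by linarith) : 0 < p / (p + 1)))
    linarith
  · rw [hB]
    exact rpow_neg_div_sub_one_le_rpow_mul_sum hm hmm'.le (by linarith) hratio'
  · rw [hT]
    exact rpow_mul_sum_tail_le (by omega) hm's.le hp hps hc n
end

section
/- Let m, m', s, n be integers with 1 ≤ m < m' < s < n, and let p > 0 be a real number. Define c = (s−1)^{p+1}/s^{p+1} and the sequence {a_i}_{i=m}^{n−1} by a_i = 1/i^{p+1} for m ≤ i ≤ s, and a_i = c^{i−s}/s^{p+1} for s ≤ i ≤ n−1. Then (Σ_{i=m'}^{n−1} a_i) / (Σ_{i=m}^{m'−1} a_i) ≤ [ 1 − (m'/s)^p + p/m' − (m'/s)^p·(p/s) + (m'/s)^p·(p/s)·(1 − c^{n−s})/(1 − c) ] / ( (m'/m)^p − 1 ). -/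
/-!
Since `x ↦ x ^ (-(p + 1))` is decreasing, the denominator `∑_{i=m}^{m'-1} i ^ (-(p + 1))` is at
least `∫_m^{m'} x ^ (-(p + 1)) dx = (m ^ (-p) - m' ^ (-p)) / p`, while the power
part `∑_{i=m'}^{s-1}` of the numerator exceeds `∫_{m'}^{s}` by at most
`m' ^ (-(p + 1)) - s ^ (-(p + 1))`.
The geometric part of the numerator sums exactly to `s ^ (-(p + 1)) (1 - c ^ (n - s)) / (1 - c)`.
-/

open Finset

theorem AntitoneOn.sum_Ico_le_integral_add {f : ℝ → ℝ} {a b : ℕ} (hab : a ≤ b)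
    (hf : AntitoneOn f (Set.Icc a b)) :
    ∑ i ∈ Ico a b, f i ≤ f a - f b + ∫ x in a..b, f x := by
  have hshift := hf.sum_le_integral_Ico hab
  have htelescope := sum_Ico_sub (fun i : ℕ => f i) hab
  rw [sum_sub_distrib] at htelescope
  linarith

theorem integral_rpow_neg_add_one {p a b : ℝ} (hp : p ≠ 0) (ha : 0 < a) (hb : 0 < b) :
    ∫ x in a..b, x ^ (-(p + 1)) = (a ^ (-p) - b ^ (-p)) / p := by
  rw [integral_rpow (Or.inr ⟨by contrapose! hp; linarith, Set.notMem_uIcc_of_lt ha hb⟩),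
    show -(p + 1) + 1 = -p by ring, div_neg, ← neg_div, neg_sub]

theorem antitoneOn_rpow_neg_add_one {p a b : ℝ} (hp : -1 ≤ p) (ha : 0 < a) :
    AntitoneOn (fun x : ℝ => x ^ (-(p + 1))) (Set.Icc a b) :=
  (Real.antitoneOn_rpow_Ioi_of_exponent_nonpos (by linarith)).mono
    fun _ hx => ha.trans_le hx.1

theorem integral_le_sum_Ico_rpow_neg_add_one {p : ℝ} (hp0 : p ≠ 0) (hp : -1 ≤ p) {m m' : ℕ}
    (hm : 0 < m) (hmm' : m ≤ m') :
    ((m : ℝ) ^ (-p) - (m' : ℝ) ^ (-p)) / p ≤ ∑ i ∈ Ico m m', (i : ℝ) ^ (-(p + 1)) := by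
  have hm0 : (0 : ℝ) < m := Nat.cast_pos.2 hm
  rw [← integral_rpow_neg_add_one hp0 hm0 (hm0.trans_le (Nat.cast_le.2 hmm'))]
  exact (antitoneOn_rpow_neg_add_one hp hm0).integral_le_sum_Ico hmm'

theorem sum_Ico_rpow_neg_add_one_le {p : ℝ} (hp0 : p ≠ 0) (hp : -1 ≤ p) {m s : ℕ}
    (hm : 0 < m) (hms : m ≤ s) :
    ∑ i ∈ Ico m s, (i : ℝ) ^ (-(p + 1))
      ≤ (m : ℝ) ^ (-(p + 1)) - (s : ℝ) ^ (-(p + 1))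
        + ((m : ℝ) ^ (-p) - (s : ℝ) ^ (-p)) / p := by
  have hm0 : (0 : ℝ) < m := Nat.cast_pos.2 hm
  rw [← integral_rpow_neg_add_one hp0 hm0 (hm0.trans_le (Nat.cast_le.2 hms))]
  exact (antitoneOn_rpow_neg_add_one hp hm0).sum_Ico_le_integral_add hms

theorem sum_Ico_pow_sub {K : Type*} [DivisionRing K] {c : K} (hc : c ≠ 1) (s n : ℕ) :
    ∑ i ∈ Ico s n, c ^ (i - s) = (1 - c ^ (n - s)) / (1 - c) := by
  rw [sum_Ico_eq_sum_range]
  simp only [add_tsub_cancel_left]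
  rw [geom_sum_eq hc, ← neg_div_neg_eq, neg_sub, neg_sub]

theorem sub_one_rpow_div_rpow_mem_Ico {x q : ℝ} (hx : 1 ≤ x) (hq : 0 < q) :
    (x - 1) ^ q / x ^ q ∈ Set.Ico 0 1 := by
  have hx0 : 0 < x ^ q := by positivity
  refine ⟨div_nonneg (Real.rpow_nonneg (by linarith) q) hx0.le, ?_⟩
  rw [div_lt_one hx0]
  exact Real.rpow_lt_rpow (by linarith) (by linarith) hq

theorem rpow_neg_sub_rpow_neg_div_pos {p a b : ℝ} (hp : 0 < p) (ha : 0 < a) (hab : a < b) :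
    0 < (a ^ (-p) - b ^ (-p)) / p :=
  div_pos (sub_pos.2 (Real.rpow_lt_rpow_of_neg ha hab (neg_neg_of_pos hp))) hp

/-- The right-hand side is the left-hand side with numerator and denominator multiplied by
`p * m' ^ p`. -/
theorem rpow_bounds_div_eq {p m m' s : ℝ} (hp : p ≠ 0) (hm : 0 < m) (hm' : 0 < m') (hs : 0 < s)
    (S : ℝ) :
    ((m' ^ (-p) - s ^ (-p)) / p + m' ^ (-(p + 1)) - s ^ (-(p + 1)) + S * s ^ (-(p + 1)))
        / ((m ^ (-p) - m' ^ (-p)) / p)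
      = (1 - (m' / s) ^ p + p / m' - (m' / s) ^ p * (p / s) + (m' / s) ^ p * (p / s) * S)
        / ((m' / m) ^ p - 1) := by
  have hneg {x : ℝ} (hx : 0 < x) : x ^ (-p) = (x ^ p)⁻¹ := Real.rpow_neg hx.le p
  have hneg_succ {x : ℝ} (hx : 0 < x) : x ^ (-(p + 1)) = (x ^ p)⁻¹ / x := by
    rw [neg_add', Real.rpow_sub_one hx.ne', hneg hx]
  rw [hneg_succ hm', hneg_succ hs, hneg hm, hneg hm', hneg hs, Real.div_rpow hm'.le hs.le,
    Real.div_rpow hm'.le hm.le]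
  have hk : p * m' ^ p ≠ 0 := by positivity
  refine (mul_div_mul_left _ _ hk).symm.trans ?_
  congr 1 <;> field_simp

noncomputable def powerGeomSeq (p c : ℝ) (s i : ℕ) : ℝ :=
  if i ≤ s then 1 / (i : ℝ) ^ (p + 1) else c ^ (i - s) / (s : ℝ) ^ (p + 1)

section powerGeomSeq

variable {p c : ℝ} {s : ℕ}

theorem powerGeomSeq_of_lt {i : ℕ} (hi : i < s) :
    powerGeomSeq p c s i = (i : ℝ) ^ (-(p + 1)) := by
  rw [powerGeomSeq, if_pos hi.le, Real.rpow_neg (Nat.cast_nonneg i), one_div]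

theorem powerGeomSeq_of_le {i : ℕ} (hi : s ≤ i) :
    powerGeomSeq p c s i = c ^ (i - s) * (s : ℝ) ^ (-(p + 1)) := by
  rw [powerGeomSeq, Real.rpow_neg (Nat.cast_nonneg s), ← div_eq_mul_inv]
  split_ifs with his
  · rw [le_antisymm his hi, Nat.sub_self, pow_zero, one_div]
  · rfl

theorem powerGeomSeq_nonneg (hc : 0 ≤ c) (i : ℕ) : 0 ≤ powerGeomSeq p c s i := by
  unfold powerGeomSeq
  split_ifs <;> positivity

theorem sum_Ico_powerGeomSeq_of_le {m m' : ℕ} (hm's : m' ≤ s) :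
    ∑ i ∈ Ico m m', powerGeomSeq p c s i = ∑ i ∈ Ico m m', (i : ℝ) ^ (-(p + 1)) :=
  sum_congr rfl fun _ hi => powerGeomSeq_of_lt ((mem_Ico.1 hi).2.trans_le hm's)

theorem sum_Ico_powerGeomSeq_le (hp0 : p ≠ 0) (hp : -1 ≤ p) (hc : c ≠ 1) {m' n : ℕ}
    (hm' : 0 < m') (hm's : m' ≤ s) (hsn : s ≤ n) :
    ∑ i ∈ Ico m' n, powerGeomSeq p c s i
      ≤ ((m' : ℝ) ^ (-p) - (s : ℝ) ^ (-p)) / p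
        + (m' : ℝ) ^ (-(p + 1)) - (s : ℝ) ^ (-(p + 1))
        + (1 - c ^ (n - s)) / (1 - c) * (s : ℝ) ^ (-(p + 1)) := by
  have htail : ∑ i ∈ Ico s n, powerGeomSeq p c s i
      = (1 - c ^ (n - s)) / (1 - c) * (s : ℝ) ^ (-(p + 1)) := by
    rw [sum_congr rfl fun _ hi => powerGeomSeq_of_le (mem_Ico.1 hi).1, ← sum_mul,
      sum_Ico_pow_sub hc]
  rw [← sum_Ico_consecutive _ hm's hsn, htail, sum_Ico_powerGeomSeq_of_le le_rfl]
  linarith [sum_Ico_rpow_neg_add_one_le hp0 hp hm' hm's]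

end powerGeomSeq

theorem stmt14 (m m' s n : ℕ) (hm : 1 ≤ m) (hmm' : m < m') (hm's : m' < s) (hsn : s < n)
    (p : ℝ) (hp : 0 < p)
    (c : ℝ) (hc : c = ((s : ℝ) - 1) ^ (p + 1) / (s : ℝ) ^ (p + 1))
    (a : ℕ → ℝ)
    (ha : ∀ i, m ≤ i → i ≤ n - 1 →
      a i = if i ≤ s then 1 / (i : ℝ) ^ (p + 1) else c ^ (i - s) / (s : ℝ) ^ (p + 1)) :
    (∑ i ∈ Finset.Ico m' n, a i) / (∑ i ∈ Finset.Ico m m', a i)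
      ≤ (1 - ((m' : ℝ) / (s : ℝ)) ^ p + p / (m' : ℝ)
          - ((m' : ℝ) / (s : ℝ)) ^ p * (p / (s : ℝ))
          + ((m' : ℝ) / (s : ℝ)) ^ p * (p / (s : ℝ)) * ((1 - c ^ (n - s)) / (1 - c)))
        / (((m' : ℝ) / (m : ℝ)) ^ p - 1) := by
  have hm0 : (0 : ℝ) < m := Nat.cast_pos.2 hm
  have hm'0 : (0 : ℝ) < m' := Nat.cast_pos.2 (by omega)
  have hs1 : (1 : ℝ) ≤ s := Nat.one_le_cast.2 (by omega)
  obtain ⟨hc0, hc1⟩ : c ∈ Set.Ico 0 1 :=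
    hc ▸ sub_one_rpow_div_rpow_mem_Ico hs1 (by linarith)
  have ha' : ∀ i ∈ Ico m n, a i = powerGeomSeq p c s i := fun i hi => by
    obtain ⟨hmi, hin⟩ := mem_Ico.1 hi
    exact ha i hmi (by omega)
  rw [sum_congr rfl fun i hi => ha' i (Ico_subset_Ico_right (hm's.trans hsn).le hi),
    sum_congr rfl fun i hi => ha' i (Ico_subset_Ico_left hmm'.le hi),
    sum_Ico_powerGeomSeq_of_le hm's.le, ← rpow_bounds_div_eq hp.ne' hm0 hm'0 (by linarith)]
  have hnum := sum_Ico_powerGeomSeq_le hp.ne' (by linarith) hc1.ne (by omega) hm's.le hsn.le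
  exact div_le_div₀ ((sum_nonneg fun i _ => powerGeomSeq_nonneg hc0 i).trans hnum) hnum
    (rpow_neg_sub_rpow_neg_div_pos hp hm0 (Nat.cast_lt.2 hmm'))
    (integral_le_sum_Ico_rpow_neg_add_one hp.ne' (by linarith) hm hmm'.le)
end
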